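/- arXiv:2007.10704 — 9 statements merged into one kernel-verified Lean document; each statement's English description precedes it below -/
import Mathlib

section
/- Let n be an even positive integer and let M_1, …, M_r be pairwise edge-disjoint perfect matchings of the complete graph K_n with r ≤ n/2 − 1. Then there exists a perfect matching of K_n that is edge-disjoint from every M_i. (Consequently, the greedy algorithm that repeatedly deletes perfect matchings from K_n always completes at least n/2 rounds.) -/
/-- A simple graph on `V` is a perfect matching (of the complete graph on `V`)
if every vertex has exactly one neighbor. -/
def IsPM {V : Type} (M : SimpleGraph V) : Prop := ∀ v : V, ∃! w : V, M.Adj v w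

/-!
A graph on an even number `n` of vertices in which every vertex has degree at least `n / 2` has a
perfect matching (a Dirac-type bound). Removing `r ≤ n / 2 - 1` perfect matchings from `K_n` leaves
such a graph, since every vertex loses only `r` neighbours.

For the Dirac-type bound take a matching with the fewest unmatched vertices. If some vertex `u` is
unmatched then, by parity, so is another vertex `v`, and by minimality all their neighbours are
matched. As `deg u + deg v ≥ n` exceeds the number of matched vertices, some matched pair `x, y`
has `u ~ x` and `v ~ y`; replacing `xy` by `ux` and `vy` matches two more vertices.
-/

open Finset Function

theorem Function.Involutive.exists_ne_apply_eq_self {V : Type*} [Fintype V] [DecidableEq V]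
    {f : V → V} (hf : Involutive f) (hV : Even (Fintype.card V)) {u : V} (hu : f u = u) :
    ∃ v ≠ u, f v = v := by
  have hfix : (hf.toPerm f).supportᶜ = ({v | f v = v} : Finset V) := by ext; simp
  have heven : Even #{v | f v = v} := by
    have := Equiv.Perm.card_compl_support_modEq (p := 2) (n := 1) (σ := hf.toPerm f)
      (by ext; simp [sq, hf _])
    rw [hfix] at this
    exact Nat.even_iff.mpr (Eq.trans this (Nat.even_iff.mp hV))
  have hu' : u ∈ ({v | f v = v} : Finset V) := by simp [hu]
  obtain ⟨v, hv, hvu⟩ := exists_mem_ne (s := {v | f v = v}) (by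
    obtain ⟨k, hk⟩ := heven; have := card_pos.mpr ⟨u, hu'⟩; omega) u
  exact ⟨v, hvu, by simpa using hv⟩

namespace SimpleGraph

variable {V : Type*} [DecidableEq V] {G : SimpleGraph V} {f : V → V}

lemma degree_iSup_le {ι : Type*} [Fintype ι] (H : ι → SimpleGraph V) (v : V)
    [Fintype ((⨆ i, H i).neighborSet v)] [∀ i, Fintype ((H i).neighborSet v)] :
    (⨆ i, H i).degree v ≤ ∑ i, (H i).degree v := by
  simp only [← card_neighborFinset_eq_degree]
  refine (card_le_card fun w hw => ?_).trans card_biUnion_le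
  simpa using hw

/-- A matching of `G`, encoded as the involution exchanging the ends of each matching edge and
fixing the unmatched vertices. -/
def IsPartialMatching (G : SimpleGraph V) (f : V → V) : Prop :=
  Involutive f ∧ ∀ v, f v ≠ v → G.Adj v (f v)

def pairUp (f : V → V) (a b : V) : V → V :=
  fun z => if z = a then b else if z = b then a else f z

@[simp] lemma pairUp_apply_left (f : V → V) (a b : V) : pairUp f a b a = b := if_pos rfl

@[simp] lemma pairUp_apply_right (f : V → V) (a b : V) : pairUp f a b b = a := by
  by_cases h : b = a <;> simp [pairUp, h]

lemma pairUp_apply_of_ne {a b z : V} (ha : z ≠ a) (hb : z ≠ b) : pairUp f a b z = f z := by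
  simp [pairUp, ha, hb]

variable [Fintype V]

lemma card_filter_apply_eq_self_lt {g : V → V} {u : V} (hfg : ∀ z, f z ≠ z → g z ≠ z)
    (hu : f u = u) (hgu : g u ≠ u) : #{z | g z = z} < #{z | f z = z} := by
  refine card_lt_card ((ssubset_iff_of_subset fun z hz => ?_).mpr ⟨u, ?_, ?_⟩)
  · simp only [mem_filter, mem_univ, true_and] at hz ⊢
    exact not_not.mp fun h => hfg z h hz
  · simpa using hu
  · simpa using hgu

lemma IsPartialMatching.exists_card_fixed_lt_of_adj (hf : G.IsPartialMatching f) {a b : V}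
    (ha : f a = a) (hb : f b = b) (hab : G.Adj a b) :
    ∃ g, G.IsPartialMatching g ∧ #{z | g z = z} < #{z | f z = z} := by
  have hfar : ∀ z, z ≠ a → z ≠ b → pairUp f a b z = f z ∧ f z ≠ a ∧ f z ≠ b :=
    fun z hza hzb => ⟨pairUp_apply_of_ne hza hzb, fun h => hza (by rw [← hf.1 z, h, ha]),
      fun h => hzb (by rw [← hf.1 z, h, hb])⟩
  refine ⟨pairUp f a b, ⟨fun z => ?_, fun z hz => ?_⟩,
    card_filter_apply_eq_self_lt (fun z hz => ?_) ha (by simpa using hab.ne.symm)⟩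
  · by_cases hza : z = a
    · simp [hza]
    by_cases hzb : z = b
    · simp [hzb]
    obtain ⟨h, h1, h2⟩ := hfar z hza hzb
    rw [h, (hfar (f z) h1 h2).1, hf.1 z]
  · by_cases hza : z = a
    · simpa [hza] using hab
    by_cases hzb : z = b
    · simpa [hzb] using hab.symm
    rw [(hfar z hza hzb).1] at hz ⊢
    exact hf.2 z hz
  · rwa [(hfar z (by rintro rfl; exact hz ha) (by rintro rfl; exact hz hb)).1]

lemma IsPartialMatching.exists_card_fixed_lt_of_adj_adj (hf : G.IsPartialMatching f)
    {u v x : V} (hu : f u = u) (hv : f v = v) (huv : u ≠ v) (hx : f x ≠ x) (hux : G.Adj u x)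
    (hvx : G.Adj v (f x)) : ∃ g, G.IsPartialMatching g ∧ #{z | g z = z} < #{z | f z = z} := by
  have hxu : x ≠ u := fun h => hx (h ▸ hu)
  have hxv : x ≠ v := fun h => hx (h ▸ hv)
  have hyu : f x ≠ u := fun h => hxu (by rw [← hf.1 x, h, hu])
  have hyv : f x ≠ v := fun h => hxv (by rw [← hf.1 x, h, hv])
  have hne : u ≠ v ∧ v ≠ u ∧ x ≠ u ∧ u ≠ x ∧ x ≠ v ∧ v ≠ x ∧ f x ≠ u ∧ u ≠ f x ∧ f x ≠ v ∧
      v ≠ f x ∧ f x ≠ x ∧ x ≠ f x :=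
    ⟨huv, huv.symm, hxu, hxu.symm, hxv, hxv.symm, hyu, hyu.symm, hyv, hyv.symm, hx, Ne.symm hx⟩
  set g := pairUp (pairUp f u x) v (f x)
  have hgu : g u = x := by simp [g, pairUp, hne]
  have hgx : g x = u := by simp [g, pairUp, hne]
  have hgv : g v = f x := by simp [g]
  have hgy : g (f x) = v := by simp [g]
  have hfar : ∀ z, z ≠ u → z ≠ v → z ≠ x → z ≠ f x →
      g z = f z ∧ f z ≠ u ∧ f z ≠ v ∧ f z ≠ x ∧ f z ≠ f x := fun z hzu hzv hzx hzy =>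
    ⟨by simp [g, pairUp, hzu, hzv, hzx, hzy], fun h => hzu (by rw [← hf.1 z, h, hu]),
      fun h => hzv (by rw [← hf.1 z, h, hv]), fun h => hzy (by rw [← h, hf.1]),
      fun h => hzx (hf.1.injective h)⟩
  have hcases : ∀ z, z = u ∨ z = v ∨ z = x ∨ z = f x ∨
      (g z = f z ∧ f z ≠ u ∧ f z ≠ v ∧ f z ≠ x ∧ f z ≠ f x) := fun z => by
    have := hfar z
    tauto
  refine ⟨g, ⟨fun z => ?_, fun z hz => ?_⟩,
    card_filter_apply_eq_self_lt (fun z hz => ?_) hu (by rw [hgu]; exact hxu)⟩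
  · rcases hcases z with rfl | rfl | rfl | rfl | ⟨h, h1, h2, h3, h4⟩
    · rw [hgu, hgx]
    · rw [hgv, hgy]
    · rw [hgx, hgu]
    · rw [hgy, hgv]
    · rw [h, (hfar (f z) h1 h2 h3 h4).1, hf.1 z]
  · rcases hcases z with rfl | rfl | rfl | rfl | ⟨h, -⟩
    · rwa [hgu]
    · rwa [hgv]
    · rw [hgx]; exact hux.symm
    · rw [hgy]; exact hvx.symm
    · rw [h] at hz ⊢
      exact hf.2 z hz
  · rcases hcases z with rfl | rfl | rfl | rfl | ⟨h, -⟩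
    · exact absurd hu hz
    · exact absurd hv hz
    · rw [hgx]; exact hxu.symm
    · rw [hgy]; exact hyv.symm
    · rwa [h]

variable [DecidableRel G.Adj]

lemma exists_adj_adj_apply (hf : Involutive f) {u v : V} (hu : f u = u)
    (hNu : ∀ w, G.Adj u w → f w ≠ w) (hNv : ∀ w, G.Adj v w → f w ≠ w)
    (hdeg : Fintype.card V ≤ G.degree u + G.degree v) : ∃ x, G.Adj u x ∧ G.Adj v (f x) := by
  have hS : #{z | f z ≠ z} < Fintype.card V :=
    card_lt_univ_of_notMem (s := {z | f z ≠ z}) (by simpa using hu)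
  obtain ⟨x, hx⟩ := inter_nonempty_of_card_lt_card_add_card (s := {z | f z ≠ z})
    (t := G.neighborFinset u) (u := (G.neighborFinset v).image f)
    (fun w hw => by simpa using hNu w (by simpa using hw))
    (fun w hw => by
      obtain ⟨b, hb, rfl⟩ := mem_image.mp hw
      simpa [hf b] using fun h => hNv b (by simpa using hb) h.symm)
    (by rw [card_image_of_injective _ hf.injective, card_neighborFinset_eq_degree,
      card_neighborFinset_eq_degree]; omega)
  obtain ⟨hux, b, hb, rfl⟩ : G.Adj u x ∧ ∃ b, G.Adj v b ∧ f b = x := by simpa using hx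
  exact ⟨f b, hux, by rwa [hf b]⟩

lemma IsPartialMatching.exists_card_fixed_lt (hf : G.IsPartialMatching f)
    (hV : Even (Fintype.card V)) (hdeg : ∀ v, Fintype.card V ≤ 2 * G.degree v) {u : V}
    (hu : f u = u) : ∃ g, G.IsPartialMatching g ∧ #{z | g z = z} < #{z | f z = z} := by
  obtain ⟨v, hvu, hv⟩ := hf.1.exists_ne_apply_eq_self hV hu
  by_cases hNu : ∃ w, G.Adj u w ∧ f w = w
  · obtain ⟨w, huw, hw⟩ := hNu
    exact hf.exists_card_fixed_lt_of_adj hu hw huw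
  by_cases hNv : ∃ w, G.Adj v w ∧ f w = w
  · obtain ⟨w, hvw, hw⟩ := hNv
    exact hf.exists_card_fixed_lt_of_adj hv hw hvw
  push Not at hNu hNv
  obtain ⟨x, hux, hvx⟩ := exists_adj_adj_apply hf.1 hu hNu hNv (by linarith [hdeg u, hdeg v])
  exact hf.exists_card_fixed_lt_of_adj_adj hu hv hvu.symm (hNu x hux) hux hvx

end SimpleGraph

open SimpleGraph

theorem exists_isPM_le_of_forall_card_le_two_mul_degree {V : Type} [Fintype V] [DecidableEq V]
    {G : SimpleGraph V} [DecidableRel G.Adj] (hV : Even (Fintype.card V))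
    (hdeg : ∀ v, Fintype.card V ≤ 2 * G.degree v) : ∃ N : SimpleGraph V, IsPM N ∧ N ≤ G := by
  classical
  obtain ⟨f, hf, hmin⟩ := exists_min_image {f | G.IsPartialMatching f}
    (fun f => #{z | f z = z})
    ⟨id, mem_filter.mpr ⟨mem_univ _, fun _ => rfl, fun _ h => absurd rfl h⟩⟩
  simp only [mem_filter, mem_univ, true_and] at hf hmin
  have hfree : ∀ v, f v ≠ v := fun u hu => by
    obtain ⟨g, hg, hlt⟩ := hf.exists_card_fixed_lt hV hdeg hu
    exact (hmin g hg).not_gt hlt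
  refine ⟨{ Adj a b := f a = b, symm := ⟨fun a b h => by rw [← h, hf.1 a]⟩, loopless := ⟨hfree⟩ },
    fun v => ⟨f v, rfl, fun _ h => Eq.symm h⟩, fun a b h => h ▸ hf.2 a (hfree a)⟩

theorem greedy_matching_lower_bound_general (n : ℕ) (heven : Even n)
    (r : ℕ) (hr : r ≤ n / 2 - 1)
    (M : Fin r → SimpleGraph (Fin n))
    (hM : ∀ i, IsPM (M i)) :
    ∃ N : SimpleGraph (Fin n), IsPM N ∧ ∀ i, Disjoint N.edgeSet (M i).edgeSet := by
  classical
  have hdeg : ∀ v, (⨆ i, M i).degree v ≤ r := fun v => by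
    simpa [fun i => degree_eq_one_iff_existsUnique_adj.mpr (hM i v)] using degree_iSup_le M v
  obtain ⟨N, hN, hNle⟩ := exists_isPM_le_of_forall_card_le_two_mul_degree
    (G := (⨆ i, M i)ᶜ) (by simpa using heven) fun v => by
      have := hdeg v
      obtain ⟨m, rfl⟩ := heven
      rw [degree_compl, Fintype.card_fin]
      omega
  exact ⟨N, hN, fun i => disjoint_edgeSet.mpr (disjoint_compl_left.mono hNle (le_iSup M i))⟩

/-- If `M_1, …, M_r` are pairwise edge-disjoint perfect matchings of `K_n`
(`n` even, positive) with `r ≤ n/2 - 1`, then there is a perfect matching of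
`K_n` edge-disjoint from every `M_i`. -/
theorem greedy_matching_lower_bound (n : ℕ) (hn : 0 < n) (heven : Even n)
    (r : ℕ) (hr : r ≤ n / 2 - 1)
    (M : Fin r → SimpleGraph (Fin n))
    (hM : ∀ i, IsPM (M i))
    (hdisj : ∀ i j : Fin r, i ≠ j → Disjoint (M i).edgeSet (M j).edgeSet) :
    ∃ N : SimpleGraph (Fin n), IsPM N ∧ ∀ i, Disjoint N.edgeSet (M i).edgeSet :=
  greedy_matching_lower_bound_general n heven r hr M hM
end

section
/- For every even positive integer n such that n/2 is odd, there exist n/2 pairwise edge-disjoint perfect matchings M_1, …, M_{n/2} of the complete graph K_n such that no perfect matching of K_n is edge-disjoint from all of them. In particular, there are infinitely many n for which a tournament with n/2 rounds exists that cannot be extended. -/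
/-!
Split the `2m` vertices into two copies of `ℤ/m` and let the `i`-th matching join `a` on the
left to `a + i` on the right. These `m` matchings use every edge between the two halves, so a
perfect matching avoiding all of them matches the left half within itself, which is impossible
when `m` is odd.
-/

namespace IsPM

variable {V W : Type} {G : SimpleGraph W}

theorem even_natCard [Finite W] (h : IsPM G) : Even (Nat.card W) := by
  have := Fintype.ofFinite W
  have hperfect : (⊤ : G.Subgraph).IsPerfectMatching :=
    SimpleGraph.Subgraph.isPerfectMatching_iff.mpr h
  simpa only [Nat.card_eq_fintype_card] using hperfect.even_card

theorem induce (h : IsPM G) {s : Set W} (hs : ∀ v w, G.Adj v w → v ∈ s → w ∈ s) :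
    IsPM (G.induce s) := by
  intro v
  obtain ⟨w, hvw, huniq⟩ := h v
  exact ⟨⟨w, hs _ _ hvw v.2⟩, hvw, fun u hvu => Subtype.ext (huniq u hvu)⟩

theorem comap (h : IsPM G) (f : V ≃ W) : IsPM (G.comap f) := by
  intro v
  obtain ⟨w, hvw, huniq⟩ := h (f v)
  refine ⟨f.symm w, by simpa using hvw, fun u hvu => ?_⟩
  simp [← huniq (f u) hvu]

end IsPM

theorem SimpleGraph.disjoint_comap {V W : Type} {G H : SimpleGraph W} (f : V → W)
    (h : Disjoint G H) : Disjoint (G.comap f) (H.comap f) := by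
  rw [disjoint_iff_inf_le] at h ⊢
  exact fun v w hvw => h hvw

section CyclicMatching

variable {α : Type} [AddGroup α]

def cyclicMatching (i : α) : SimpleGraph (α ⊕ α) where
  Adj x y := match x, y with
    | .inl a, .inr b => b = a + i
    | .inr b, .inl a => b = a + i
    | _, _ => False
  symm := ⟨fun
    | .inl _, .inr _, h => h
    | .inr _, .inl _, h => h⟩
  loopless := ⟨fun
    | .inl _, h => h
    | .inr _, h => h⟩

variable {i j : α}

@[simp] theorem cyclicMatching_adj_inl_inr {a b : α} :
    (cyclicMatching i).Adj (.inl a) (.inr b) ↔ b = a + i := .rfl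

@[simp] theorem cyclicMatching_adj_inr_inl {a b : α} :
    (cyclicMatching i).Adj (.inr b) (.inl a) ↔ b = a + i := .rfl

@[simp] theorem not_cyclicMatching_adj_inl_inl {a b : α} :
    ¬ (cyclicMatching i).Adj (.inl a) (.inl b) := id

@[simp] theorem not_cyclicMatching_adj_inr_inr {a b : α} :
    ¬ (cyclicMatching i).Adj (.inr a) (.inr b) := id

theorem isPM_cyclicMatching (i : α) : IsPM (cyclicMatching i) := by
  rintro (a | b)
  · exact ⟨.inr (a + i), by simp, by rintro (_ | _) <;> simp +contextual⟩
  · exact ⟨.inl (b - i), by simp, by rintro (_ | _) <;> simp [eq_sub_iff_add_eq, eq_comm]⟩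

theorem disjoint_cyclicMatching (hij : i ≠ j) :
    Disjoint (cyclicMatching i) (cyclicMatching j) := by
  rw [disjoint_iff_inf_le]
  rintro (_ | _) (_ | _) ⟨hi, hj⟩ <;> simp_all

theorem cyclicMatching_neg_add_adj (a b : α) :
    (cyclicMatching (-a + b)).Adj (.inl a) (.inr b) := by
  simp

theorem not_exists_isPM_disjoint_cyclicMatching [Finite α] (hα : Odd (Nat.card α)) :
    ¬ ∃ N : SimpleGraph (α ⊕ α), IsPM N ∧ ∀ i, Disjoint N (cyclicMatching i) := by
  rintro ⟨N, hN, hdisj⟩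
  have hleft_closed :
      ∀ x y, N.Adj x y → x ∈ Set.range Sum.inl → y ∈ Set.range Sum.inl := by
    rintro x (b | b) hxy ⟨a, rfl⟩
    · exact ⟨b, rfl⟩
    · exact ((hdisj (-a + b)).le_bot ⟨hxy, cyclicMatching_neg_add_adj a b⟩).elim
  have heven := (hN.induce hleft_closed).even_natCard
  rw [Nat.card_range_of_injective Sum.inl_injective] at heven
  exact Nat.not_even_iff_odd.mpr hα heven

end CyclicMatching

theorem matching_upper_bound_example_general (n : ℕ) (heven : Even n)
    (hodd : Odd (n / 2)) :
    ∃ M : Fin (n / 2) → SimpleGraph (Fin n),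
      (∀ i, IsPM (M i)) ∧
      (∀ i j : Fin (n / 2), i ≠ j → Disjoint (M i).edgeSet (M j).edgeSet) ∧
      ¬ ∃ N : SimpleGraph (Fin n), IsPM N ∧ ∀ i, Disjoint N.edgeSet (M i).edgeSet := by
  have : NeZero (n / 2) := ⟨hodd.pos.ne'⟩
  let e : Fin (n / 2) ⊕ Fin (n / 2) ≃ Fin n :=
    finSumFinEquiv.trans (finCongr (by have := Nat.two_mul_div_two_of_even heven; omega))
  refine ⟨fun i => (cyclicMatching i).comap e.symm, fun i => (isPM_cyclicMatching i).comap _,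
    fun i j hij => ?_, ?_⟩
  · simpa using SimpleGraph.disjoint_comap e.symm (disjoint_cyclicMatching hij)
  · rintro ⟨N, hN, hdisj⟩
    refine not_exists_isPM_disjoint_cyclicMatching (by simpa using hodd)
      ⟨N.comap e, hN.comap e, fun i => ?_⟩
    simpa [SimpleGraph.comap_comap] using
      SimpleGraph.disjoint_comap e (SimpleGraph.disjoint_edgeSet.mp (hdisj i))

/-- For every even positive `n` with `n/2` odd, there are `n/2` pairwise
edge-disjoint perfect matchings of `K_n` such that no perfect matching of `K_n`
is edge-disjoint from all of them. -/
theorem matching_upper_bound_example (n : ℕ) (hn : 0 < n) (heven : Even n)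
    (hodd : Odd (n / 2)) :
    ∃ M : Fin (n / 2) → SimpleGraph (Fin n),
      (∀ i, IsPM (M i)) ∧
      (∀ i j : Fin (n / 2), i ≠ j → Disjoint (M i).edgeSet (M j).edgeSet) ∧
      ¬ ∃ N : SimpleGraph (Fin n), IsPM N ∧ ∀ i, Disjoint N.edgeSet (M i).edgeSet :=
  matching_upper_bound_example_general n heven hodd
end

section
/- Let n be an even positive integer, let M_1, …, M_{n/2} be pairwise edge-disjoint perfect matchings of the complete graph K_n, and let G be the feasibility graph of this tournament. Then G contains no perfect matching if and only if n/2 is odd and the complement of G is the complete bipartite graph K_{n/2, n/2}, i.e., there exists a set A of exactly n/2 vertices such that the edges lying in some M_i are exactly the pairs {a, b} with a ∈ A and b ∉ A. -/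
open Finset

theorem Finset.even_card_of_involution {α : Type*} [DecidableEq α] {f : α → α} {s : Finset α}
    (hs : ∀ x ∈ s, f x ∈ s) (hf : ∀ x ∈ s, f (f x) = x) (hne : ∀ x ∈ s, f x ≠ x) :
    Even #s := by
  induction s using Finset.strongInduction with
  | H s ih =>
    obtain rfl | ⟨x, hx⟩ := s.eq_empty_or_nonempty
    · simp
    have hfx : f x ∈ s.erase x := mem_erase.2 ⟨hne x hx, hs x hx⟩
    have hcard : #((s.erase x).erase (f x)) + 2 = #s := by
      have := card_erase_add_one hfx
      have := card_erase_add_one hx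
      omega
    have ht := ih _ ((erase_ssubset hfx).trans (erase_ssubset hx)) ?_ ?_ ?_
    · rw [← hcard]
      exact ht.add even_two
    all_goals
      intro y hy
      simp only [mem_erase] at hy ⊢
      grind

namespace SimpleGraph

variable {V : Type*} {G : SimpleGraph V} {H : Finset V} {p : V → V} {a b x : V}

/-- `p` is a perfect matching of `G` minus the holes `H`, encoded as an involution of the
vertices outside `H`; its values on `H` are irrelevant. -/
def IsMatchingOutside (G : SimpleGraph V) (H : Finset V) (p : V → V) : Prop :=
  ∀ w ∉ H, p w ∉ H ∧ p (p w) = w ∧ G.Adj w (p w)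

theorem IsMatchingOutside.injOn (hp : G.IsMatchingOutside H p) : Set.InjOn p (↑H)ᶜ :=
  fun x hx y hy hxy => by rw [← (hp x hx).2.1, hxy, (hp y hy).2.1]

theorem not_isMatchingOutside_empty_of_odd {A : Finset V} (hA : Odd #A)
    (hadj : ∀ a b, G.Adj a b → (a ∈ A ↔ b ∈ A)) : ¬ G.IsMatchingOutside ∅ p := fun hp => by
  classical
  have hp' (x : V) := hp x (notMem_empty x)
  refine Nat.not_even_iff_odd.2 hA (even_card_of_involution (fun x hx => ?_)
    (fun x _ => (hp' x).2.1) (fun x _ => (hp' x).2.2.ne'))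
  exact (hadj x (p x) (hp' x).2.2).1 hx

variable [DecidableEq V]

def rematch (p : V → V) (a b : V) : V → V :=
  fun z => if z = a then b else if z = b then a else p z

namespace IsMatchingOutside

theorem mem_image_iff {s : Finset V} (hp : G.IsMatchingOutside H p) (hs : Disjoint s H)
    (hx : x ∉ H) : x ∈ s.image p ↔ p x ∈ s := by
  refine ⟨?_, fun h => mem_image.2 ⟨p x, h, (hp x hx).2.1⟩⟩
  simp only [mem_image]
  rintro ⟨y, hy, rfl⟩
  rwa [(hp y (Finset.disjoint_left.1 hs hy)).2.1]

theorem card_image {s : Finset V} (hp : G.IsMatchingOutside H p) (hs : Disjoint s H) :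
    #(s.image p) = #s :=
  card_image_of_injOn (hp.injOn.mono fun _ hy => Finset.disjoint_left.1 hs hy)

theorem disjoint_image {s : Finset V} (hp : G.IsMatchingOutside H p) (hs : Disjoint s H) :
    Disjoint (s.image p) H := by
  simp only [Finset.disjoint_left, mem_image]
  rintro _ ⟨y, hy, rfl⟩
  exact (hp y (Finset.disjoint_left.1 hs hy)).1

theorem rematch_of_mem (hp : G.IsMatchingOutside H p) (ha : a ∈ H) (hb : b ∈ H)
    (hab : G.Adj a b) : G.IsMatchingOutside ((H.erase a).erase b) (rematch p a b) := by
  intro w hw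
  have := hp w
  simp only [mem_erase, rematch] at hw ⊢
  grind [hab.symm, hab.ne]

theorem rematch_of_notMem (hp : G.IsMatchingOutside H p) (ha : a ∈ H) (hx : x ∉ H)
    (hax : G.Adj a x) : G.IsMatchingOutside (insert (p x) (H.erase a)) (rematch p a x) := by
  intro w hw
  have := hp w
  have hpx := hp x hx
  simp only [mem_insert, mem_erase, rematch] at hw ⊢
  grind [hax.symm, hax.ne, hpx.2.2.ne]

variable {u v : V}

protected theorem symm (hp : G.IsMatchingOutside {u, v} p) : G.IsMatchingOutside {v, u} p := by
  rwa [pair_comm]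

theorem not_adj (hstuck : ∀ q, ¬ G.IsMatchingOutside ∅ q) (hp : G.IsMatchingOutside {u, v} p) :
    ¬ G.Adj u v := fun huv => by
  have := hp.rematch_of_mem (mem_insert_self u {v}) (mem_insert_of_mem (mem_singleton_self v)) huv
  rw [erase_insert (by simpa using huv.ne), erase_singleton] at this
  exact hstuck _ this

theorem rematch_pair (hp : G.IsMatchingOutside {u, v} p) (huv : u ≠ v) (hux : G.Adj u x)
    (hxv : x ≠ v) : G.IsMatchingOutside {p x, v} (rematch p u x) := by
  have := hp.rematch_of_notMem (mem_insert_self u {v}) (by simp [hux.ne', hxv]) hux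
  rwa [erase_insert (by simpa using huv)] at this

theorem not_adj_partner (hstuck : ∀ q, ¬ G.IsMatchingOutside ∅ q)
    (hp : G.IsMatchingOutside {u, v} p) (huv : u ≠ v) (hux : G.Adj u x) (hxv : x ≠ v) :
    ¬ G.Adj v (p x) := fun h =>
  (hp.rematch_pair huv hux hxv).not_adj hstuck h.symm

end IsMatchingOutside

variable [Fintype V] [DecidableRel G.Adj] {k : ℕ}

theorem IsMatchingOutside.exists_card_add_two (hdeg : ∀ w, k ≤ G.degree w)
    (hp : G.IsMatchingOutside H p) (hH : 1 < #H) (hcard : Fintype.card V < 2 * k + #H) :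
    ∃ q H', G.IsMatchingOutside H' q ∧ #H' + 2 = #H := by
  by_cases hedge : ∃ a ∈ H, ∃ b ∈ H, G.Adj a b
  · obtain ⟨a, ha, b, hb, hab⟩ := hedge
    refine ⟨_, _, hp.rematch_of_mem ha hb hab, ?_⟩
    rw [card_erase_of_mem (mem_erase.2 ⟨hab.ne', hb⟩), card_erase_of_mem ha]
    omega
  push Not at hedge
  obtain ⟨a, ha, b, hb, hab⟩ := one_lt_card.1 hH
  have hN : ∀ c ∈ H, Disjoint (G.neighborFinset c) H := fun c hc =>
    Finset.disjoint_left.2 fun y hy hyH => hedge c hc y hyH ((G.mem_neighborFinset _ _).1 hy)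
  -- pigeonhole inside `Hᶜ`, which has fewer than `2 * k` vertices
  obtain ⟨x, hx'⟩ : (G.neighborFinset a ∩ (G.neighborFinset b).image p).Nonempty := by
    refine inter_nonempty_of_card_lt_card_add_card (subset_compl_iff_disjoint_right.2 (hN a ha))
      (subset_compl_iff_disjoint_right.2 (hp.disjoint_image (hN b hb))) ?_
    rw [hp.card_image (hN b hb), card_compl, card_neighborFinset_eq_degree,
      card_neighborFinset_eq_degree]
    have := hdeg a
    have := hdeg b
    have := card_le_univ H
    omega
  obtain ⟨hxa, hxb⟩ := mem_inter.1 hx'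
  have hx : x ∉ H := Finset.disjoint_left.1 (hN a ha) hxa
  rw [mem_neighborFinset] at hxa
  rw [hp.mem_image_iff (hN b hb) hx, mem_neighborFinset] at hxb
  have hpx : p x ∉ H.erase a := fun h => (hp x hx).1 (mem_of_mem_erase h)
  have hb' : b ∈ insert (p x) (H.erase a) := mem_insert_of_mem (mem_erase.2 ⟨hab.symm, hb⟩)
  refine ⟨_, _, (hp.rematch_of_notMem ha hx hxa).rematch_of_mem (mem_insert_self _ _) hb'
    hxb.symm, ?_⟩
  rw [card_erase_of_mem (mem_erase.2 ⟨hxb.ne, hb'⟩), card_erase_of_mem (mem_insert_self _ _),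
    card_insert_of_notMem hpx, card_erase_add_one ha]
  omega

theorem exists_isMatchingOutside_pair (hreg : G.IsRegularOfDegree k)
    (hcard : Fintype.card V = 2 * k + 2) : ∃ p u v, u ≠ v ∧ G.IsMatchingOutside {u, v} p := by
  have hstep : ∀ m ≤ k, ∃ p H, G.IsMatchingOutside H p ∧ #H + 2 * m = 2 * k + 2 := by
    intro m
    induction m with
    | zero => exact fun _ => ⟨id, univ, fun w hw => absurd (mem_univ w) hw, by simp [hcard]⟩
    | succ m ih =>
      intro hm
      obtain ⟨p, H, hp, hH⟩ := ih (by omega)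
      obtain ⟨q, H', hq, hH'⟩ :=
        hp.exists_card_add_two (fun w => (hreg.degree_eq w).ge) (by omega) (by omega)
      exact ⟨q, H', hq, by omega⟩
  obtain ⟨p, H, hp, hH⟩ := hstep k le_rfl
  obtain ⟨u, v, huv, rfl⟩ := card_eq_two.1 (by omega : #H = 2)
  exact ⟨p, u, v, huv, hp⟩

namespace IsMatchingOutside

variable {u v y : V}

theorem disjoint_neighborFinset (hstuck : ∀ q, ¬ G.IsMatchingOutside ∅ q)
    (hp : G.IsMatchingOutside {u, v} p) : Disjoint (G.neighborFinset u) {u, v} :=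
  Finset.disjoint_left.2 fun y hy => by
    rw [mem_neighborFinset] at hy
    rw [mem_insert, mem_singleton, not_or]
    exact ⟨hy.ne', by rintro rfl; exact hp.not_adj hstuck hy⟩

theorem adj_of_not_adj_partner (hreg : G.IsRegularOfDegree k)
    (hcard : Fintype.card V = 2 * k + 2) (hstuck : ∀ q, ¬ G.IsMatchingOutside ∅ q)
    (hp : G.IsMatchingOutside {u, v} p) (huv : u ≠ v) (hxu : x ≠ u) (hxv : x ≠ v)
    (hx : ¬ G.Adj v (p x)) : G.Adj u x := by
  have hNu := hp.disjoint_neighborFinset hstuck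
  have hNv := pair_comm v u ▸ hp.symm.disjoint_neighborFinset hstuck
  have hdisj : Disjoint (G.neighborFinset u) ((G.neighborFinset v).image p) :=
    Finset.disjoint_left.2 fun y hy hy' => by
      rw [hp.mem_image_iff hNv (Finset.disjoint_left.1 hNu hy), mem_neighborFinset] at hy'
      rw [mem_neighborFinset] at hy
      exact hp.not_adj_partner hstuck huv hy (fun h => hp.not_adj hstuck (h ▸ hy)) hy'
  -- `N(u)` and `p(N(v))` are disjoint `k`-sets inside the `2k` vertices off `{u, v}`
  have hcover : G.neighborFinset u ∪ (G.neighborFinset v).image p = {u, v}ᶜ := by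
    refine eq_of_subset_of_card_le (union_subset (subset_compl_iff_disjoint_right.2 hNu)
      (subset_compl_iff_disjoint_right.2 (hp.disjoint_image hNv))) ?_
    rw [card_union_of_disjoint hdisj, hp.card_image hNv, card_compl, card_pair huv,
      card_neighborFinset_eq_degree, card_neighborFinset_eq_degree, hreg.degree_eq,
      hreg.degree_eq, hcard]
    omega
  have hxH : x ∉ ({u, v} : Finset V) := by simp [hxu, hxv]
  have hx' : x ∈ ({u, v} : Finset V)ᶜ := mem_compl.2 hxH
  rw [← hcover, mem_union, hp.mem_image_iff hNv hxH, mem_neighborFinset,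
    mem_neighborFinset] at hx'
  exact hx'.resolve_right hx

theorem adj_partner_of_adj_of_adj (hreg : G.IsRegularOfDegree k)
    (hcard : Fintype.card V = 2 * k + 2) (hstuck : ∀ q, ¬ G.IsMatchingOutside ∅ q)
    (hp : G.IsMatchingOutside {u, v} p) (huv : u ≠ v) (hux : G.Adj u x) (huy : G.Adj u y)
    (hyx : y ≠ p x) : G.Adj (p x) y := by
  have hxv : x ≠ v := fun h => hp.not_adj hstuck (h ▸ hux)
  have hyv : y ≠ v := fun h => hp.not_adj hstuck (h ▸ huy)
  have hpxv : p x ≠ v := fun h => (hp x (by simp [hux.ne', hxv])).1 (by simp [h])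
  refine (hp.rematch_pair huv hux hxv).adj_of_not_adj_partner hreg hcard hstuck hpxv hyx hyv ?_
  rw [rematch, if_neg huy.ne']
  split_ifs
  · exact fun h => hp.not_adj hstuck h.symm
  · exact hp.not_adj_partner hstuck huv huy hyv

theorem not_adj_of_adj (hreg : G.IsRegularOfDegree k) (hcard : Fintype.card V = 2 * k + 2)
    (hstuck : ∀ q, ¬ G.IsMatchingOutside ∅ q) (hp : G.IsMatchingOutside {u, v} p) (huv : u ≠ v)
    (hux : G.Adj u x) : ¬ G.Adj v x := fun hvx => by
  have hNu := hp.disjoint_neighborFinset hstuck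
  -- `x` would be adjacent to `u`, `v` and every `p y` with `y ∈ N(u)`: that is `k + 1` vertices
  have hT : Disjoint (((G.neighborFinset u).image p).erase x) {u, v} :=
    (hp.disjoint_image hNu).mono_left (erase_subset _ _)
  have hsub : insert u (insert v (((G.neighborFinset u).image p).erase x)) ⊆
      G.neighborFinset x := by
    intro z hz
    rw [mem_neighborFinset]
    rcases mem_insert.1 hz with rfl | hz
    · exact hux.symm
    rcases mem_insert.1 hz with rfl | hz
    · exact hvx.symm
    obtain ⟨hzx, hz⟩ := mem_erase.1 hz
    obtain ⟨y, hy, rfl⟩ := mem_image.1 hz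
    exact (hp.adj_partner_of_adj_of_adj hreg hcard hstuck huv ((G.mem_neighborFinset _ _).1 hy)
      hux hzx.symm).symm
  have hupper := card_le_card hsub
  rw [card_insert_of_notMem (by simp [huv, Finset.disjoint_right.1 hT]),
    card_insert_of_notMem (Finset.disjoint_right.1 hT (by simp)), card_neighborFinset_eq_degree,
    hreg.degree_eq] at hupper
  have hlower := pred_card_le_card_erase (s := (G.neighborFinset u).image p) (a := x)
  rw [hp.card_image hNu, card_neighborFinset_eq_degree, hreg.degree_eq] at hlower
  omega

theorem adj_partner_of_adj (hreg : G.IsRegularOfDegree k) (hcard : Fintype.card V = 2 * k + 2)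
    (hstuck : ∀ q, ¬ G.IsMatchingOutside ∅ q) (hp : G.IsMatchingOutside {u, v} p) (huv : u ≠ v)
    (hux : G.Adj u x) : G.Adj u (p x) := by
  obtain ⟨hpx, hppx, -⟩ := hp x (Finset.disjoint_left.1 (hp.disjoint_neighborFinset hstuck)
    ((G.mem_neighborFinset _ _).2 hux))
  simp only [mem_insert, mem_singleton, not_or] at hpx
  refine hp.adj_of_not_adj_partner hreg hcard hstuck huv hpx.1 hpx.2 ?_
  rw [hppx]
  exact hp.not_adj_of_adj hreg hcard hstuck huv hux

theorem isClique_insert_neighborFinset (hreg : G.IsRegularOfDegree k)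
    (hcard : Fintype.card V = 2 * k + 2) (hstuck : ∀ q, ¬ G.IsMatchingOutside ∅ q)
    (hp : G.IsMatchingOutside {u, v} p) (huv : u ≠ v) :
    G.IsClique (insert u (G.neighborFinset u) : Finset V) := by
  have hN (x y : V) (hux : G.Adj u x) (huy : G.Adj u y) (hxy : x ≠ y) : G.Adj x y := by
    obtain ⟨-, hppx, -⟩ := hp x (Finset.disjoint_left.1 (hp.disjoint_neighborFinset hstuck)
      ((G.mem_neighborFinset _ _).2 hux))
    have := hp.adj_partner_of_adj_of_adj hreg hcard hstuck huv
      (hp.adj_partner_of_adj hreg hcard hstuck huv hux) huy (by rw [hppx]; exact hxy.symm)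
    rwa [hppx] at this
  intro x hx y hy hxy
  simp only [coe_insert, coe_neighborFinset, Set.mem_insert_iff, mem_neighborSet] at hx hy
  rcases hx with rfl | hx <;> rcases hy with rfl | hy
  exacts [absurd rfl hxy, hy, hx.symm, hN x y hx hy hxy]

end IsMatchingOutside

namespace IsRegularOfDegree

theorem neighborFinset_eq_erase_of_isClique (hreg : G.IsRegularOfDegree k) {A : Finset V}
    (hA : G.IsClique (A : Set V)) (hcardA : #A = k + 1) (ha : a ∈ A) :
    G.neighborFinset a = A.erase a := by
  refine (eq_of_subset_of_card_le (fun b hb => ?_) ?_).symm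
  · obtain ⟨hba, hb⟩ := mem_erase.1 hb
    exact (G.mem_neighborFinset _ _).2 (hA ha hb hba.symm)
  · rw [card_neighborFinset_eq_degree, hreg.degree_eq, card_erase_of_mem ha, hcardA,
      Nat.add_sub_cancel]

theorem adj_iff_of_isClique_compl (hreg : G.IsRegularOfDegree k) {A : Finset V}
    (hA : G.IsClique (A : Set V)) (hAc : G.IsClique ((Aᶜ : Finset V) : Set V))
    (hcardA : #A = k + 1) (hcardAc : #Aᶜ = k + 1) (hab : a ≠ b) :
    G.Adj a b ↔ (a ∈ A ↔ b ∈ A) := by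
  rw [← mem_neighborFinset]
  by_cases ha : a ∈ A
  · rw [hreg.neighborFinset_eq_erase_of_isClique hA hcardA ha]
    simp [ha, hab.symm]
  · rw [hreg.neighborFinset_eq_erase_of_isClique hAc hcardAc (mem_compl.2 ha)]
    simp [ha, hab.symm]

theorem even_and_exists_of_forall_not_isMatchingOutside_empty (hreg : G.IsRegularOfDegree k)
    (hcard : Fintype.card V = 2 * k + 2) (hstuck : ∀ q, ¬ G.IsMatchingOutside ∅ q) :
    Even k ∧ ∃ A : Finset V, #A = k + 1 ∧ ∀ a b, a ≠ b → (G.Adj a b ↔ (a ∈ A ↔ b ∈ A)) := by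
  obtain ⟨p, u, v, huv, hp⟩ := exists_isMatchingOutside_pair hreg hcard
  have hNu := hp.disjoint_neighborFinset hstuck
  have hcardA : #(insert u (G.neighborFinset u)) = k + 1 := by
    rw [card_insert_of_notMem (by simp), card_neighborFinset_eq_degree, hreg.degree_eq]
  have hcompl : insert v (G.neighborFinset v) = (insert u (G.neighborFinset u))ᶜ := by
    refine eq_of_subset_of_card_le (fun x hx => ?_) ?_
    · simp only [mem_compl, mem_insert, mem_neighborFinset] at hx ⊢
      rintro (rfl | hux)
      · exact hx.elim huv (fun h => hp.not_adj hstuck h.symm)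
      · exact hx.elim (fun h => hp.not_adj hstuck (h ▸ hux))
          (hp.not_adj_of_adj hreg hcard hstuck huv hux)
    · rw [card_compl, hcardA, card_insert_of_notMem (by simp), card_neighborFinset_eq_degree,
        hreg.degree_eq, hcard]
      omega
  refine ⟨?_, _, hcardA, fun a b hab => hreg.adj_iff_of_isClique_compl
    (hp.isClique_insert_neighborFinset hreg hcard hstuck huv) ?_ hcardA ?_ hab⟩
  · rw [← hreg.degree_eq u, ← card_neighborFinset_eq_degree]
    refine even_card_of_involution (f := p) (fun x hx => ?_) (fun x hx => ?_) (fun x hx => ?_) <;>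
      rw [mem_neighborFinset] at hx
    · exact (G.mem_neighborFinset _ _).2 (hp.adj_partner_of_adj hreg hcard hstuck huv hx)
    · exact (hp x (Finset.disjoint_left.1 hNu ((G.mem_neighborFinset _ _).2 hx))).2.1
    · exact (hp x (Finset.disjoint_left.1 hNu ((G.mem_neighborFinset _ _).2 hx))).2.2.ne'
  · rw [← hcompl]
    exact hp.symm.isClique_insert_neighborFinset hreg hcard hstuck huv.symm
  · rw [← hcompl, card_insert_of_notMem (by simp), card_neighborFinset_eq_degree, hreg.degree_eq]

theorem forall_not_isMatchingOutside_empty_iff (hreg : G.IsRegularOfDegree k)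
    (hcard : Fintype.card V = 2 * k + 2) :
    (∀ q, ¬ G.IsMatchingOutside ∅ q) ↔
      Even k ∧ ∃ A : Finset V, #A = k + 1 ∧ ∀ a b, a ≠ b → (G.Adj a b ↔ (a ∈ A ↔ b ∈ A)) := by
  refine ⟨hreg.even_and_exists_of_forall_not_isMatchingOutside_empty hcard, ?_⟩
  rintro ⟨hk, A, hA, hadj⟩ q
  exact not_isMatchingOutside_empty_of_odd (hA ▸ hk.add_one) fun a b h => (hadj a b h.ne).1 h

end IsRegularOfDegree

end SimpleGraph

theorem exists_isPM_le_iff_exists_isMatchingOutside_empty {V : Type} {G : SimpleGraph V} :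
    (∃ N, IsPM N ∧ N ≤ G) ↔ ∃ p, G.IsMatchingOutside ∅ p := by
  constructor
  · rintro ⟨N, hN, hNG⟩
    choose p hp hpu using hN
    exact ⟨p, fun w _ => ⟨notMem_empty _, (hpu _ w (hp w).symm).symm, hNG (hp w)⟩⟩
  · rintro ⟨p, hp⟩
    have hp' (x : V) := hp x (notMem_empty x)
    refine ⟨⟨fun x y => y = p x, ⟨fun x y h => ?_⟩, ⟨fun x h => ?_⟩⟩,
      fun w => ⟨p w, rfl, fun y hy => hy⟩, fun x y h => ?_⟩
    · rw [h, (hp' x).2.1]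
    · exact (hp' x).2.2.ne h
    · exact h ▸ (hp' x).2.2

theorem degree_add_card_add_one_eq_of_isPM {V ι : Type} [Fintype V] [DecidableEq V]
    [Fintype ι] {G : SimpleGraph V} [DecidableRel G.Adj] {M : ι → SimpleGraph V}
    (hM : ∀ i, IsPM (M i)) (hdisj : ∀ i j, i ≠ j → Disjoint (M i).edgeSet (M j).edgeSet)
    (hG : ∀ u v, G.Adj u v ↔ u ≠ v ∧ ∀ i, ¬ (M i).Adj u v) (w : V) :
    G.degree w + Fintype.card ι + 1 = Fintype.card V := by
  choose f hf using fun i => (hM i w).exists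
  have hinj : Function.Injective f := fun i j hij => by
    by_contra hne
    exact Set.disjoint_left.1 (hdisj i j hne) ((M i).mem_edgeSet.2 (hf i))
      ((M j).mem_edgeSet.2 (hij ▸ hf j))
  have hadj (i : ι) (z : V) : (M i).Adj w z ↔ f i = z :=
    ⟨(hM i w).unique (hf i), fun h => h ▸ hf i⟩
  have hN : G.neighborFinset w = (insert w (univ.image f))ᶜ := by
    ext z
    simp [hG, hadj, eq_comm]
  rw [← SimpleGraph.card_neighborFinset_eq_degree, hN,
    ← card_compl_add_card (insert w (univ.image f)),
    card_insert_of_notMem (by simpa using fun i => (hf i).ne'), card_image_of_injective _ hinj,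
    card_univ, add_assoc]

/-- Given `n/2` pairwise edge-disjoint perfect matchings of `K_n` with
feasibility graph `G`, the graph `G` contains no perfect matching iff `n/2` is
odd and the complement of `G` is the complete bipartite graph `K_{n/2,n/2}`,
i.e. there is a set `A` of exactly `n/2` vertices such that the edges used by
the matchings are exactly the pairs `{a, b}` with `a ∈ A` and `b ∉ A`. -/
theorem matching_stuck_characterization (n : ℕ) (hn : 0 < n) (heven : Even n)
    (M : Fin (n / 2) → SimpleGraph (Fin n))
    (hM : ∀ i, IsPM (M i))
    (hdisj : ∀ i j : Fin (n / 2), i ≠ j → Disjoint (M i).edgeSet (M j).edgeSet)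
    (G : SimpleGraph (Fin n))
    (hG : ∀ u v : Fin n, G.Adj u v ↔ u ≠ v ∧ ∀ i, ¬ (M i).Adj u v) :
    (¬ ∃ N : SimpleGraph (Fin n), IsPM N ∧ N ≤ G) ↔
      (Odd (n / 2) ∧ ∃ A : Finset (Fin n), A.card = n / 2 ∧
        ∀ u v : Fin n,
          (∃ i, (M i).Adj u v) ↔ ((u ∈ A ∧ v ∉ A) ∨ (v ∈ A ∧ u ∉ A))) := by
  classical
  obtain ⟨k, hk⟩ : ∃ k, n = 2 * k + 2 := by
    obtain ⟨t, rfl⟩ := heven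
    exact ⟨t - 1, by omega⟩
  have hhalf : n / 2 = k + 1 := by omega
  have hreg : G.IsRegularOfDegree k := fun w => by
    have := degree_add_card_add_one_eq_of_isPM hM hdisj hG w
    simp only [Fintype.card_fin] at this
    omega
  have hused (u v : Fin n) : (∃ i, (M i).Adj u v) ↔ u ≠ v ∧ ¬ G.Adj u v := by
    rw [hG]
    constructor
    · rintro ⟨i, hi⟩
      exact ⟨hi.ne, fun h => h.2 i hi⟩
    · rintro ⟨huv, h⟩
      simpa [huv] using h
  rw [exists_isPM_le_iff_exists_isMatchingOutside_empty, not_exists,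
    hreg.forall_not_isMatchingOutside_empty_iff (by simp [hk])]
  refine and_congr (by rw [hhalf, Nat.odd_add_one, Nat.not_odd_iff_even])
    (exists_congr fun A => and_congr (by rw [hhalf]) (forall₂_congr fun u v => ?_))
  rw [hused]
  by_cases huv : u = v
  · simp [huv]
  · tauto
end

section
/- Let n be a positive integer divisible by 4 and let M_1, …, M_r be pairwise edge-disjoint perfect matchings of the complete graph K_n with r ≤ n/2. Then there exists a perfect matching of K_n that is edge-disjoint from every M_i. (Consequently, for n divisible by four, the greedy algorithm that repeatedly deletes perfect matchings from K_n always completes at least n/2 + 1 rounds.) -/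
/-!
The feasibility graph is `(n - 1 - r)`-regular with `n ≤ 2 (n - 1 - r) + 2`, so it suffices that a
`d`-regular graph on `n ≡ 0 (mod 4)` vertices with `n ≤ 2 d + 2` has a perfect matching.
Take a maximum matching and suppose `u ≠ v` are unmatched. As there are no augmenting paths of
length 1 or 3, the partners of the neighbours of `u` and the neighbours of `v` are disjoint sets
of `d` matched vertices each; counting forces `2 d + 2 = n` and makes them partition the
vertices other than `u, v`. If `u` and `v` have no common neighbour, `N(u)` is closed under the
matching, so `d` is even, contradicting `4 ∣ n`. If `w` is a common neighbour, rematching `v` with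
`w` gives another maximum matching with `u` and the former partner `w'` of `w` unmatched, and
comparing the two partitions gives `N(v) = N(w')`. Iterating, all `n - d` vertices outside `N(u)`
have neighbourhood `N(u)`, hence are adjacent to `w`, which is impossible as `d < n - d`.
-/

open Finset Equiv Equiv.Perm

lemma Equiv.Perm.two_dvd_card_of_sq_eq_one {α : Type*} [DecidableEq α] {σ : Perm α}
    (hσ : σ ^ 2 = 1) {s : Finset α} (hs : ∀ x, σ x ∈ s ↔ x ∈ s) (hfix : ∀ x ∈ s, σ x ≠ x) :
    2 ∣ #s := by
  have h := two_dvd_card_support (σ := σ.subtypePerm hs) (by ext; simp [hσ])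
  have hsupp : (σ.subtypePerm hs).support = univ := by
    ext x; simpa [Subtype.ext_iff] using hfix x x.2
  rwa [hsupp, card_univ, Fintype.card_coe] at h

namespace SimpleGraph

variable {V : Type*} {G : SimpleGraph V}

lemma isRegularOfDegree_iSup [Fintype V] [DecidableEq V] {ι : Type*} [Fintype ι]
    {M : ι → SimpleGraph V} [∀ i, DecidableRel (M i).Adj] [DecidableRel (⨆ i, M i).Adj] {k : ℕ}
    (hdisj : Pairwise fun i j => Disjoint (M i) (M j)) (hM : ∀ i, (M i).IsRegularOfDegree k) :
    (⨆ i, M i).IsRegularOfDegree (Fintype.card ι * k) := fun v => by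
  have hN : (⨆ i, M i).neighborFinset v = univ.biUnion fun i => (M i).neighborFinset v := by
    ext w; simp [iSup_adj]
  rw [← card_neighborFinset_eq_degree, hN, card_biUnion]
  · simp only [card_neighborFinset_eq_degree, hM _ v, sum_const, card_univ, smul_eq_mul]
  · intro i _ j _ hij
    simp only [Finset.disjoint_left, mem_neighborFinset]
    intro w hi hj
    exact (disjoint_edgeSet.2 (hdisj hij)).ne_of_mem ((mem_edgeSet _).2 hi)
      ((mem_edgeSet _).2 hj) rfl

/-- A matching of `G` encoded as the involution exchanging the ends of each matching edge and
fixing the unmatched vertices. -/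
structure IsMatchingPerm (G : SimpleGraph V) (σ : Perm V) : Prop where
  involutive : Function.Involutive σ
  adj : ∀ v, σ v ≠ v → G.Adj v (σ v)

namespace IsMatchingPerm

variable {σ : Perm V} {a b v w : V}

lemma sq_eq_one (hσ : IsMatchingPerm G σ) : σ ^ 2 = 1 :=
  Perm.ext fun v => hσ.involutive v

lemma exists_isPerfectMatching (hσ : IsMatchingPerm G σ)
    (hfix : ∀ v, σ v ≠ v) : ∃ M : G.Subgraph, M.IsPerfectMatching := by
  have hle : fromRel (fun a b => σ a = b) ≤ G := by
    rintro a _ ⟨-, rfl | rfl⟩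
    exacts [hσ.adj a (hfix a), (hσ.adj _ (hfix _)).symm]
  refine ⟨toSubgraph _ hle, Subgraph.isPerfectMatching_iff.2 fun v => ?_⟩
  refine ⟨σ v, ⟨(hfix v).symm, .inl rfl⟩, fun w ⟨_, hw⟩ => ?_⟩
  rcases hw with rfl | rfl
  exacts [rfl, (hσ.involutive w).symm]

variable [DecidableEq V]

lemma swap_mul (hσ : IsMatchingPerm G σ) (ha : σ a = a) (hb : σ b = b) (hab : G.Adj a b) :
    IsMatchingPerm G (swap a b * σ) where
  involutive z := by
    have hcomm : σ * swap a b = swap a b * σ := by rw [mul_swap_eq_swap_mul, ha, hb]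
    rw [← Perm.mul_apply, mul_assoc, ← mul_assoc σ, hcomm, mul_assoc, ← mul_assoc, swap_mul_self,
      one_mul, Perm.mul_apply, hσ.involutive]
  adj z hz := by
    by_cases hza : z = a
    · subst hza; simpa [ha] using hab
    by_cases hzb : z = b
    · subst hzb; simpa [hb] using hab.symm
    have hσa : σ z ≠ a := fun h => hza (σ.injective (h.trans ha.symm))
    have hσb : σ z ≠ b := fun h => hzb (σ.injective (h.trans hb.symm))
    simp only [Perm.mul_apply, swap_apply_of_ne_of_ne hσa hσb] at hz ⊢
    exact hσ.adj z hz

/-- Replaces the matching edge `w — σ w` by `v — w`. -/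
lemma conj_swap (hσ : IsMatchingPerm G σ) (hv : σ v = v) (hw : σ w ≠ w) (hvw : G.Adj v w) :
    IsMatchingPerm G (swap v (σ w) * σ * swap v (σ w)) where
  involutive z := by simp [hσ.involutive _]
  adj z hz := by
    by_cases hzv : z = v
    · subst hzv
      simpa [hσ.involutive w, swap_apply_of_ne_of_ne hvw.ne.symm hw.symm] using hvw
    by_cases hzw : z = w
    · subst hzw
      simpa [swap_apply_of_ne_of_ne hzv hw.symm] using hvw.symm
    by_cases hzw' : z = σ w
    · subst hzw'; simp [hv] at hz
    have h1 : σ z ≠ v := fun h => hzv (σ.injective (h.trans hv.symm))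
    have h2 : σ z ≠ σ w := fun h => hzw (σ.injective h)
    simp only [Perm.mul_apply, swap_apply_of_ne_of_ne hzv hzw', swap_apply_of_ne_of_ne h1 h2]
      at hz ⊢
    exact hσ.adj z hz

end IsMatchingPerm

variable [Fintype V] [DecidableEq V]

lemma IsMatchingPerm.exists_ne_apply_eq_self {σ : Perm V} {u : V} (hσ : IsMatchingPerm G σ)
    (h2 : 2 ∣ Fintype.card V) (hu : σ u = u) : ∃ v ≠ u, σ v = v := by
  have hsub : σ.support ⊆ univ.erase u := fun x hx =>
    mem_erase.2 ⟨fun h => Perm.mem_support.1 hx (h ▸ hu), mem_univ x⟩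
  have hlt : #σ.support < #(univ.erase u) := by
    have hle := card_le_card hsub
    have heven := two_dvd_card_support hσ.sq_eq_one
    have hpos := Fintype.card_pos_iff.2 ⟨u⟩
    rw [card_erase_of_mem (mem_univ u), card_univ] at hle ⊢
    omega
  obtain ⟨v, hv, hvσ⟩ := exists_mem_notMem_of_card_lt_card hlt
  exact ⟨v, ne_of_mem_erase hv, Perm.notMem_support.1 hvσ⟩

def IsMaximumMatchingPerm (G : SimpleGraph V) (σ : Perm V) : Prop :=
  IsMatchingPerm G σ ∧ ∀ τ, IsMatchingPerm G τ → #τ.support ≤ #σ.support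

lemma exists_isMaximumMatchingPerm (G : SimpleGraph V) : ∃ σ, IsMaximumMatchingPerm G σ := by
  classical
  obtain ⟨σ, hσ, hmax⟩ := exists_max_image {σ | IsMatchingPerm G σ} (#·.support)
    ⟨1, by simpa using (⟨fun _ => rfl, fun _ h => absurd rfl h⟩ : IsMatchingPerm G 1)⟩
  exact ⟨σ, (mem_filter.1 hσ).2, fun τ hτ => hmax τ (by simpa using hτ)⟩

namespace IsMaximumMatchingPerm

variable {σ : Perm V} (hσ : IsMaximumMatchingPerm G σ) {a b u v w z : V}
include hσ

lemma not_adj_of_apply_eq_self (ha : σ a = a) (hb : σ b = b) : ¬ G.Adj a b := fun hab => by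
  have hdisj : Perm.Disjoint (swap a b) σ := fun x => by
    by_cases hxa : x = a
    · exact .inr (hxa ▸ ha)
    by_cases hxb : x = b
    · exact .inr (hxb ▸ hb)
    exact .inl (swap_apply_of_ne_of_ne hxa hxb)
  have := hσ.2 _ (hσ.1.swap_mul ha hb hab)
  rw [hdisj.card_support_mul, card_support_swap hab.ne] at this
  omega

lemma apply_ne_self_of_adj (ha : σ a = a) (haz : G.Adj a z) : σ z ≠ z :=
  fun hz => hσ.not_adj_of_apply_eq_self ha hz haz

lemma conj_swap (hv : σ v = v) (hvw : G.Adj v w) :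
    IsMaximumMatchingPerm G (swap v (σ w) * σ * swap v (σ w)) := by
  refine ⟨hσ.1.conj_swap hv (hσ.apply_ne_self_of_adj hv hvw) hvw, fun τ hτ => ?_⟩
  have hcard := card_support_conj (σ := swap v (σ w)) (τ := σ)
  rw [swap_inv] at hcard
  exact hcard ▸ hσ.2 τ hτ

lemma not_adj_apply_of_adj (hu : σ u = u) (hv : σ v = v) (huv : u ≠ v) (huz : G.Adj u z) :
    ¬ G.Adj v (σ z) := fun hvz => by
  -- augment along `u — z — σ z — v`: rematch `u` with `z`, then add the edge `σ z — v`
  have hz := hσ.apply_ne_self_of_adj hu huz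
  have hρ := hσ.conj_swap hu huz
  set ρ := swap u (σ z) * σ * swap u (σ z)
  have hvz' : v ≠ σ z := hvz.ne
  have hρv : ρ v = v := by
    simp [ρ, hv, swap_apply_of_ne_of_ne huv.symm hvz']
  have hρz : ρ (σ z) = σ z := by simp [ρ, hu]
  exact hρ.not_adj_of_apply_eq_self hρz hρv hvz.symm

lemma disjoint_image_neighborFinset [DecidableRel G.Adj] (hu : σ u = u) (hv : σ v = v)
    (huv : u ≠ v) : Disjoint ((G.neighborFinset u).image σ) (G.neighborFinset v) := by
  simp only [Finset.disjoint_left, mem_image, mem_neighborFinset]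
  rintro _ ⟨y, huy, rfl⟩
  exact hσ.not_adj_apply_of_adj hu hv huv huy

section Regular

variable [DecidableRel G.Adj] {d : ℕ} (hG : G.IsRegularOfDegree d)
  (hd : Fintype.card V ≤ 2 * d + 2) (hu : σ u = u) (hv : σ v = v) (huv : u ≠ v)
include hG hu hv huv

lemma card_image_neighborFinset_union :
    #((G.neighborFinset u).image σ ∪ G.neighborFinset v) = 2 * d := by
  rw [card_union_of_disjoint (hσ.disjoint_image_neighborFinset hu hv huv),
    card_image_of_injective _ σ.injective, card_neighborFinset_eq_degree,
    card_neighborFinset_eq_degree, hG, hG, two_mul]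

include hd in
lemma image_neighborFinset_union_eq :
    (G.neighborFinset u).image σ ∪ G.neighborFinset v = {u, v}ᶜ := by
  have hA : (G.neighborFinset u).image σ ⊆ σ.support := by
    simp only [subset_iff, mem_image, mem_neighborFinset, Perm.mem_support]
    rintro _ ⟨y, huy, rfl⟩
    rw [hσ.1.involutive y]
    exact (hσ.apply_ne_self_of_adj hu huy).symm
  have hB : G.neighborFinset v ⊆ σ.support := fun y hy =>
    Perm.mem_support.2 (hσ.apply_ne_self_of_adj hv ((mem_neighborFinset ..).1 hy))
  have hS : σ.support ⊆ {u, v}ᶜ := fun y hy => by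
    have := Perm.mem_support.1 hy
    simp only [mem_compl, mem_insert, mem_singleton, not_or]
    exact ⟨fun h => this (h ▸ hu), fun h => this (h ▸ hv)⟩
  refine eq_of_subset_of_card_le ((union_subset hA hB).trans hS) ?_
  have := card_add_card_compl {u, v}
  rw [card_pair huv] at this
  rw [hσ.card_image_neighborFinset_union hG hu hv huv]
  omega

include hd in
lemma two_mul_add_two_eq_card : 2 * d + 2 = Fintype.card V := by
  have h := congrArg card (hσ.image_neighborFinset_union_eq hG hd hu hv huv)
  have := card_add_card_compl {u, v}
  rw [card_pair huv] at this
  rw [hσ.card_image_neighborFinset_union hG hu hv huv] at h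
  omega

include hd in
lemma adj_iff_not_adj_apply (hzu : z ≠ u) (hzv : z ≠ v) : G.Adj v z ↔ ¬ G.Adj u (σ z) := by
  refine ⟨fun hvz huz => hσ.not_adj_apply_of_adj hu hv huv huz (by rwa [hσ.1.involutive z]),
    fun huz => ?_⟩
  have hz : z ∈ (G.neighborFinset u).image σ ∪ G.neighborFinset v := by
    rw [hσ.image_neighborFinset_union_eq hG hd hu hv huv]
    simp [hzu, hzv]
  simp only [mem_union, mem_image, mem_neighborFinset] at hz
  obtain ⟨y, huy, rfl⟩ | hvz := hz
  · rw [hσ.1.involutive y] at huz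
    exact absurd huy huz
  · exact hvz

include hd in
lemma neighborFinset_eq_of_adj_of_adj (huw : G.Adj u w) (hvw : G.Adj v w) :
    G.neighborFinset v = G.neighborFinset (σ w) := by
  have hw := hσ.apply_ne_self_of_adj hu huw
  have huw' : u ≠ σ w := fun h => huw.ne (by rw [← hu, h, hσ.1.involutive])
  -- `ρ` is a maximum matching leaving `u` and `σ w` unmatched; compare the partitions it and `σ`
  -- induce via `adj_iff_not_adj_apply`
  have hρ := hσ.conj_swap hv hvw
  set ρ := swap v (σ w) * σ * swap v (σ w)
  have hρu : ρ u = u := by simp [ρ, swap_apply_of_ne_of_ne huv huw', hu]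
  have hρw : ρ (σ w) = σ w := by simp [ρ, hv]
  ext z
  simp only [mem_neighborFinset]
  by_cases hzu : z = u
  · subst hzu
    exact iff_of_false (hσ.not_adj_of_apply_eq_self hv hu) (hρ.not_adj_of_apply_eq_self hρw hρu)
  by_cases hzv : z = v
  · subst hzv
    exact iff_of_false G.irrefl fun h => hσ.not_adj_apply_of_adj hu hv huv huw h.symm
  by_cases hzw' : z = σ w
  · subst hzw'
    exact iff_of_false (hσ.not_adj_apply_of_adj hu hv huv huw) G.irrefl
  by_cases hzw : z = w
  · subst hzw
    exact iff_of_true hvw (hσ.1.adj z hw).symm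
  have hρz : ρ z = σ z := by
    have h1 : σ z ≠ v := fun h => hzv (σ.injective (h.trans hv.symm))
    have h2 : σ z ≠ σ w := fun h => hzw (σ.injective h)
    simp [ρ, swap_apply_of_ne_of_ne hzv hzw', swap_apply_of_ne_of_ne h1 h2]
  rw [hσ.adj_iff_not_adj_apply hG hd hu hv huv hzu hzv,
    hρ.adj_iff_not_adj_apply hG hd hρu hρw huw' hzu hzw', hρz]

include hd in
lemma two_dvd_of_disjoint_neighborFinset
    (hdisj : Disjoint (G.neighborFinset u) (G.neighborFinset v)) : 2 ∣ d := by
  have hclosed : ∀ x, G.Adj u x → G.Adj u (σ x) := fun x hux => by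
    have hxv : x ≠ v := fun h => hσ.not_adj_of_apply_eq_self hu hv (h ▸ hux)
    refine not_not.1 fun h => ?_
    have hvx := (hσ.adj_iff_not_adj_apply hG hd hu hv huv hux.ne' hxv).2 h
    exact Finset.disjoint_left.1 hdisj ((mem_neighborFinset ..).2 hux)
      ((mem_neighborFinset ..).2 hvx)
  rw [← hG u, ← card_neighborFinset_eq_degree]
  refine two_dvd_card_of_sq_eq_one hσ.1.sq_eq_one (fun x => ?_) fun x hx => ?_
  · simp only [mem_neighborFinset]
    exact ⟨fun h => by simpa [hσ.1.involutive x] using hclosed _ h, hclosed x⟩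
  · exact hσ.apply_ne_self_of_adj hu ((mem_neighborFinset ..).1 hx)

include hd in
lemma card_le_two_mul_of_adj_of_adj (huw : G.Adj u w) (hvw : G.Adj v w) :
    Fintype.card V ≤ 2 * d := by
  have hvu : G.neighborFinset v = G.neighborFinset u :=
    (hσ.neighborFinset_eq_of_adj_of_adj hG hd hu hv huv huw hvw).trans
      (hσ.neighborFinset_eq_of_adj_of_adj hG hd hv hu huv.symm hvw huw).symm
  have hsub : (G.neighborFinset u)ᶜ ⊆ G.neighborFinset w := fun z hz => by
    rw [mem_compl, mem_neighborFinset] at hz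
    rw [mem_neighborFinset]
    by_cases hzu : z = u
    · exact hzu ▸ huw.symm
    by_cases hzv : z = v
    · exact hzv ▸ hvw.symm
    have hvz : ¬ G.Adj v z := by rwa [← mem_neighborFinset, hvu, mem_neighborFinset]
    have huz' := not_not.1 ((hσ.adj_iff_not_adj_apply hG hd hu hv huv hzu hzv).not.1 hvz)
    have hvz' : G.Adj v (σ z) := by rwa [← mem_neighborFinset, hvu, mem_neighborFinset]
    have hNz := hσ.neighborFinset_eq_of_adj_of_adj hG hd hu hv huv huz' hvz'
    rw [hσ.1.involutive z] at hNz
    have hwz : w ∈ G.neighborFinset z := hNz ▸ (mem_neighborFinset ..).2 hvw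
    exact ((mem_neighborFinset ..).1 hwz).symm
  have := card_le_card hsub
  rw [card_compl, card_neighborFinset_eq_degree, card_neighborFinset_eq_degree, hG, hG] at this
  omega

end Regular

end IsMaximumMatchingPerm

theorem exists_isPerfectMatching_of_isRegularOfDegree [DecidableRel G.Adj] {d : ℕ}
    (hG : G.IsRegularOfDegree d) (h4 : 4 ∣ Fintype.card V) (hd : Fintype.card V ≤ 2 * d + 2) :
    ∃ M : G.Subgraph, M.IsPerfectMatching := by
  obtain ⟨σ, hσ⟩ := exists_isMaximumMatchingPerm G
  refine hσ.1.exists_isPerfectMatching fun u hu => ?_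
  obtain ⟨v, hvu, hv⟩ := hσ.1.exists_ne_apply_eq_self (dvd_trans ⟨2, rfl⟩ h4) hu
  have hcard := hσ.two_mul_add_two_eq_card hG hd hu hv hvu.symm
  by_cases hcommon : ∃ w, G.Adj u w ∧ G.Adj v w
  · obtain ⟨w, huw, hvw⟩ := hcommon
    have := hσ.card_le_two_mul_of_adj_of_adj hG hd hu hv hvu.symm huw hvw
    omega
  · have hdisj : Disjoint (G.neighborFinset u) (G.neighborFinset v) := by
      simp only [Finset.disjoint_left, mem_neighborFinset]
      exact fun w huw hvw => hcommon ⟨w, huw, hvw⟩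
    have := hσ.two_dvd_of_disjoint_neighborFinset hG hd hu hv hvu.symm hdisj
    omega

end SimpleGraph

theorem greedy_matching_div_four_general (n : ℕ) (h4 : 4 ∣ n)
    (r : ℕ) (hr : r ≤ n / 2)
    (M : Fin r → SimpleGraph (Fin n))
    (hM : ∀ i, IsPM (M i))
    (hdisj : ∀ i j : Fin r, i ≠ j → Disjoint (M i).edgeSet (M j).edgeSet) :
    ∃ N : SimpleGraph (Fin n), IsPM N ∧ ∀ i, Disjoint N.edgeSet (M i).edgeSet := by
  classical
  have hF : (⨆ i, M i)ᶜ.IsRegularOfDegree (n - 1 - r) := by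
    have hdisj' i j (hij : i ≠ j) := SimpleGraph.disjoint_edgeSet.1 (hdisj i j hij)
    have hM' i := fun v => SimpleGraph.degree_eq_one_iff_existsUnique_adj.2 (hM i v)
    simpa using (SimpleGraph.isRegularOfDegree_iSup hdisj' hM').compl
  obtain ⟨N, hN⟩ := SimpleGraph.exists_isPerfectMatching_of_isRegularOfDegree hF
    (by simpa using h4) (by simp only [Fintype.card_fin]; omega)
  refine ⟨N.spanningCoe, fun v => hN.1 (hN.2 v), fun i => ?_⟩
  rw [SimpleGraph.disjoint_edgeSet]
  exact (le_compl_iff_disjoint_right.1 N.spanningCoe_le).mono_right (le_iSup M i)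

/-- If `n` is a positive integer divisible by `4` and `M_1, …, M_r` are pairwise
edge-disjoint perfect matchings of `K_n` with `r ≤ n/2`, then there is a perfect
matching of `K_n` edge-disjoint from every `M_i`. -/
theorem greedy_matching_div_four (n : ℕ) (hn : 0 < n) (h4 : 4 ∣ n)
    (r : ℕ) (hr : r ≤ n / 2)
    (M : Fin r → SimpleGraph (Fin n))
    (hM : ∀ i, IsPM (M i))
    (hdisj : ∀ i j : Fin r, i ≠ j → Disjoint (M i).edgeSet (M j).edgeSet) :
    ∃ N : SimpleGraph (Fin n), IsPM N ∧ ∀ i, Disjoint N.edgeSet (M i).edgeSet :=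
  greedy_matching_div_four_general n h4 r hr M hM hdisj
end

section
/- Let n ≥ 4 be an even integer and let M_1, …, M_{n/2−1} be pairwise edge-disjoint perfect matchings of the complete graph K_n. Then there exist two further perfect matchings M and M' of K_n such that M_1, …, M_{n/2−1}, M, M' are pairwise edge-disjoint. In other words, by selecting the matching in round n/2 carefully, every tournament can be continued to n/2 + 1 rounds. -/
/-!
The union of the `n/2 - 1` given matchings has maximum degree at most `n/2 - 1`, so the
feasibility graph has minimum degree at least `n/2`. By Dirac's theorem it has a Hamiltonian
cycle, and since `n` is even, the alternate edges of that cycle form two edge-disjoint perfect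
matchings.

Dirac's theorem is proved by Ore's rotation argument: take a cyclic ordering `f` of the vertices
with the fewest non-adjacent consecutive pairs. If `f 0` and `f 1` are not adjacent, the degree
condition and pigeonhole give `q` with `f 0 ~ f q` and `f 1 ~ f (q + 1)`; reversing the segment
`1, …, q` removes this break without creating a new one.
-/

open Finset

namespace ZMod

variable {n : ℕ}

lemma val_add_one_eq_ite [NeZero n] (t : ZMod n) :
    (t + 1).val = if t.val + 1 = n then 0 else t.val + 1 := by
  rcases eq_or_ne n 1 with rfl | hn
  · have := t.val_lt; have := (t + 1).val_lt
    split_ifs <;> omega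
  rw [val_add, val_one'' hn]
  have := t.val_lt
  split_ifs with h
  · rw [h, Nat.mod_self]
  · exact Nat.mod_eq_of_lt (by omega)

def reverseSegment (c : ℕ) (k : ZMod n) : ZMod n :=
  if 1 ≤ k.val ∧ k.val ≤ c then c + 1 - k else k

variable {c : ℕ} {k : ZMod n}

lemma reverseSegment_of_mem (h1 : 1 ≤ k.val) (h2 : k.val ≤ c) :
    reverseSegment c k = c + 1 - k := if_pos ⟨h1, h2⟩

lemma reverseSegment_of_notMem (h : ¬(1 ≤ k.val ∧ k.val ≤ c)) : reverseSegment c k = k :=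
  if_neg h

variable [NeZero n]

lemma val_reverseSegment (hc : c < n) (h1 : 1 ≤ k.val) (h2 : k.val ≤ c) :
    (reverseSegment c k).val = c + 1 - k.val := by
  rw [reverseSegment_of_mem h1 h2, ← val_cast_of_lt (show c + 1 - k.val < n by omega)]
  congr 1
  rw [Nat.cast_sub (by omega), natCast_zmod_val]
  push_cast; ring

lemma reverseSegment_involutive (hc : c < n) :
    Function.Involutive (reverseSegment (n := n) c) := by
  intro k
  by_cases h : 1 ≤ k.val ∧ k.val ≤ c
  · have hv := val_reverseSegment hc h.1 h.2
    rw [reverseSegment_of_mem (by omega) (by omega), reverseSegment_of_mem h.1 h.2]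
    ring
  · rw [reverseSegment_of_notMem h, reverseSegment_of_notMem h]

end ZMod

open ZMod

section Dirac

variable {V : Type*} (H : SimpleGraph V) [DecidableRel H.Adj] {n : ℕ} [NeZero n]

def breaks (f : ZMod n → V) : Finset (ZMod n) := {i | ¬H.Adj (f i) (f (i + 1))}

lemma mem_breaks {f : ZMod n → V} {i : ZMod n} : i ∈ breaks H f ↔ ¬H.Adj (f i) (f (i + 1)) := by
  simp [breaks]

lemma card_filter_adj_equiv [Fintype V] {α : Type*} [Fintype α] (e : α ≃ V) (a : V) :
    #{j | H.Adj a (e j)} = H.degree a := by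
  rw [← H.card_neighborFinset_eq_degree]
  exact card_equiv e (by simp)

lemma exists_adj_adj_add_one [Fintype V] (hdeg : ∀ v, n ≤ 2 * H.degree v)
    (f : ZMod n ≃ V) (i : ZMod n) : ∃ q, H.Adj (f i) (f q) ∧ H.Adj (f (i + 1)) (f (q + 1)) := by
  have hA := card_filter_adj_equiv H f (f i)
  have hB : #{j | H.Adj (f (i + 1)) (f (j + 1))} = H.degree (f (i + 1)) :=
    card_filter_adj_equiv H ((Equiv.addRight 1).trans f) _
  obtain ⟨q, hq⟩ := inter_nonempty_of_card_lt_card_add_card (s := univ.erase i)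
    (t := {j | H.Adj (f i) (f j)}) (u := {j | H.Adj (f (i + 1)) (f (j + 1))})
    (fun j hj => mem_erase.2 ⟨by rintro rfl; exact H.irrefl (mem_filter.1 hj).2, mem_univ j⟩)
    (fun j hj => mem_erase.2 ⟨by rintro rfl; exact H.irrefl (mem_filter.1 hj).2, mem_univ j⟩)
    (by rw [hA, hB, card_erase_of_mem (mem_univ i), card_univ, ZMod.card]
        have := hdeg (f i); have := hdeg (f (i + 1)); have := NeZero.pos n; omega)
  simp only [mem_inter, mem_filter, mem_univ, true_and] at hq
  exact ⟨q, hq⟩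

/-- Reversing `1, …, q` turns the pairs at `0` and `q` into the edges `f 0 f q` and
`f 1 f (q + 1)`; any other pair at `t` is the pair of `f` at `reverseSegment (q - 1) t`,
reversed. -/
lemma mapsTo_reverseSegment_breaks {f : ZMod n → V} {q : ZMod n} (hq : 2 ≤ q.val)
    (h0 : H.Adj (f 0) (f q)) (h1 : H.Adj (f 1) (f (q + 1))) :
    Set.MapsTo (reverseSegment (q.val - 1))
      (breaks H (f ∘ reverseSegment q.val) : Set (ZMod n))
      ((breaks H f).erase 0 : Set (ZMod n)) := by
  intro t ht
  rw [mem_coe, mem_breaks] at ht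
  simp only [Function.comp_apply] at ht
  rw [mem_coe, mem_erase, mem_breaks]
  have hqn := q.val_lt
  have hq_cast : (q.val : ZMod n) = q := natCast_zmod_val q
  have ht1 := val_add_one_eq_ite t
  obtain h | h | h | h :
      t.val = 0 ∨ (1 ≤ t.val ∧ t.val < q.val) ∨ t.val = q.val ∨ q.val < t.val := by
    omega
  · obtain rfl : t = 0 := (ZMod.val_eq_zero t).1 h
    have h1v : (1 : ZMod n).val = 1 := val_one'' (by omega)
    rw [zero_add, reverseSegment_of_notMem (by simp), reverseSegment_of_mem (by omega) (by omega),
      hq_cast, add_sub_cancel_right] at ht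
    exact (ht h0).elim
  · rw [if_neg (by omega)] at ht1
    have hs :=
      val_reverseSegment (show q.val - 1 < n by omega) h.1 (show t.val ≤ q.val - 1 by omega)
    rw [reverseSegment_of_mem h.1 (by omega), reverseSegment_of_mem (by omega) (by omega),
      hq_cast] at ht
    rw [reverseSegment_of_mem h.1 (by omega), Nat.cast_sub (by omega), Nat.cast_one,
      hq_cast] at hs ⊢
    refine ⟨fun h0 => by rw [h0, ZMod.val_zero] at hs; omega, fun hadj => ht ?_⟩
    convert hadj.symm using 2 <;> ring
  · obtain rfl : t = q := ZMod.val_injective n h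
    rw [reverseSegment_of_mem (by omega) le_rfl,
      reverseSegment_of_notMem (by split_ifs at ht1 <;> omega), hq_cast, add_sub_cancel_left] at ht
    exact (ht h1).elim
  · rw [reverseSegment_of_notMem (by omega),
      reverseSegment_of_notMem (by split_ifs at ht1 <;> omega)] at ht
    rw [reverseSegment_of_notMem (by omega)]
    exact ⟨by rintro rfl; rw [ZMod.val_zero] at h; omega, ht⟩

lemma card_breaks_add_left (f : ZMod n → V) (p : ZMod n) :
    #(breaks H (fun i => f (p + i))) = #(breaks H f) :=
  card_equiv (Equiv.addLeft p) fun i => by simp [mem_breaks, add_assoc]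

lemma exists_card_breaks_lt [Fintype V] (hdeg : ∀ v, n ≤ 2 * H.degree v) (f : ZMod n ≃ V)
    {p : ZMod n} (hp : p ∈ breaks H f) : ∃ g : ZMod n ≃ V, #(breaks H g) < #(breaks H f) := by
  set f' := (Equiv.addLeft p).trans f
  have hf' : ¬H.Adj (f' 0) (f' 1) := by simpa [f', mem_breaks] using hp
  obtain ⟨q, h0, h1⟩ := exists_adj_adj_add_one H hdeg f' 0
  rw [zero_add] at h1
  have hq : 2 ≤ q.val := by
    have hq0 : q.val ≠ 0 := fun h => H.irrefl ((ZMod.val_eq_zero q).1 h ▸ h0)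
    have hq1 : q.val ≠ 1 := fun h => hf' (by rwa [← natCast_zmod_val q, h, Nat.cast_one] at h0)
    omega
  refine ⟨(reverseSegment_involutive q.val_lt).toPerm.trans f', ?_⟩
  calc #(breaks H ((reverseSegment_involutive q.val_lt).toPerm.trans f'))
      ≤ #((breaks H f').erase 0) :=
        card_le_card_of_injOn _ (mapsTo_reverseSegment_breaks H hq h0 h1)
          (reverseSegment_involutive (by have := q.val_lt; omega)).injective.injOn
    _ < #(breaks H f') := card_erase_lt_of_mem ((mem_breaks H).2 (by rwa [zero_add]))
    _ = #(breaks H f) := card_breaks_add_left H f p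

theorem exists_equiv_adj_add_one [Fintype V] [DecidableEq V] (hcard : Fintype.card V = n)
    (hdeg : ∀ v, n ≤ 2 * H.degree v) : ∃ f : ZMod n ≃ V, ∀ i, H.Adj (f i) (f (i + 1)) := by
  have : Nonempty (ZMod n ≃ V) := ⟨Fintype.equivOfCardEq (by rw [ZMod.card, hcard])⟩
  obtain ⟨f, -, hmin⟩ :=
    exists_min_image univ (fun f : ZMod n ≃ V => #(breaks H f)) univ_nonempty
  refine ⟨f, fun i => not_not.1 fun hi => ?_⟩
  obtain ⟨g, hg⟩ := exists_card_breaks_lt H hdeg f ((mem_breaks H).2 hi)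
  exact (hmin g (mem_univ g)).not_gt hg

end Dirac

section Involution

variable {V : Type} {σ : V → V}

lemma fromRel_apply_eq_adj_iff (hσ : Function.Involutive σ) (hfix : ∀ v, σ v ≠ v) {u v : V} :
    (SimpleGraph.fromRel fun u v => σ u = v).Adj u v ↔ σ u = v := by
  rw [SimpleGraph.fromRel_adj]
  constructor
  · rintro ⟨-, h | rfl⟩
    exacts [h, hσ v]
  · rintro rfl
    exact ⟨(hfix u).symm, .inl rfl⟩

lemma isPM_fromRel_of_involutive (hσ : Function.Involutive σ) (hfix : ∀ v, σ v ≠ v) :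
    IsPM (SimpleGraph.fromRel fun u v => σ u = v) := fun u =>
  ⟨σ u, (fromRel_apply_eq_adj_iff hσ hfix).2 rfl,
    fun _ h => ((fromRel_apply_eq_adj_iff hσ hfix).1 h).symm⟩

end Involution

section Alternating

variable {n : ℕ} (h2 : 2 ∣ n)

def alternatingStep (c : ZMod 2) (i : ZMod n) : ZMod n :=
  if ZMod.castHom h2 (ZMod 2) i = c then i + 1 else i - 1

lemma alternatingStep_involutive (c : ZMod 2) : Function.Involutive (alternatingStep h2 c) := by
  intro i
  unfold alternatingStep
  by_cases h : ZMod.castHom h2 (ZMod 2) i = c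
  · have : ∀ a : ZMod 2, a + 1 ≠ a := by decide
    rw [if_pos h, map_add, map_one, h, if_neg (this c), add_sub_cancel_right]
  · have : ∀ a b : ZMod 2, a ≠ b → a - 1 = b := by decide
    rw [if_neg h, map_sub, map_one, if_pos (this _ _ h), sub_add_cancel]

lemma alternatingStep_ne_self (c : ZMod 2) (i : ZMod n) : alternatingStep h2 c i ≠ i := by
  have h1 : (1 : ZMod n) ≠ 0 := by
    rw [← Nat.cast_one, Ne, ZMod.natCast_eq_zero_iff]
    exact fun h => by simpa using Nat.dvd_trans h2 h
  unfold alternatingStep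
  split_ifs
  · exact fun h => h1 (by linear_combination h)
  · exact fun h => h1 (by linear_combination -h)

lemma alternatingStep_zero_ne_one (hn : n ≠ 2) (i : ZMod n) :
    alternatingStep h2 0 i ≠ alternatingStep h2 1 i := by
  have h2' : (2 : ZMod n) ≠ 0 := by
    rw [← Nat.cast_ofNat, Ne, ZMod.natCast_eq_zero_iff]
    exact fun h => hn (Nat.dvd_antisymm h h2)
  unfold alternatingStep
  split_ifs with h0 h1 h1
  · exact absurd (h0.symm.trans h1) (by decide)
  · exact fun h => h2' (by linear_combination h)
  · exact fun h => h2' (by linear_combination -h)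
  · have : ∀ a : ZMod 2, a = 0 ∨ a = 1 := by decide
    exact ((this _).elim h0 h1).elim

lemma adj_alternatingStep {V : Type*} {H : SimpleGraph V} {f : ZMod n → V}
    (hf : ∀ i, H.Adj (f i) (f (i + 1))) (c : ZMod 2) (i : ZMod n) :
    H.Adj (f i) (f (alternatingStep h2 c i)) := by
  unfold alternatingStep
  split_ifs
  · exact hf i
  · simpa using (hf (i - 1)).symm

end Alternating

theorem exists_disjoint_isPM_le_of_adj_add_one {V : Type} {H : SimpleGraph V} {n : ℕ}
    (hn : n ≠ 2) (heven : Even n) (f : ZMod n ≃ V) (hf : ∀ i, H.Adj (f i) (f (i + 1))) :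
    ∃ N N' : SimpleGraph V, IsPM N ∧ IsPM N' ∧ N ≤ H ∧ N' ≤ H ∧ Disjoint N N' := by
  have h2 := even_iff_two_dvd.1 heven
  let σ (c : ZMod 2) : V → V := f ∘ alternatingStep h2 c ∘ f.symm
  have hσ (c : ZMod 2) : Function.Involutive (σ c) := fun v => by
    simp [σ, alternatingStep_involutive h2 c _]
  have hfix (c : ZMod 2) (v : V) : σ c v ≠ v := fun h =>
    alternatingStep_ne_self h2 c (f.symm v) (f.symm_apply_eq.2 h.symm).symm
  have hadj {c : ZMod 2} {u v : V} (h : (SimpleGraph.fromRel fun u v => σ c u = v).Adj u v) :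
      σ c u = v := (fromRel_apply_eq_adj_iff (hσ c) (hfix c)).1 h
  have hle (c : ZMod 2) : (SimpleGraph.fromRel fun u v => σ c u = v) ≤ H := fun u v huv => by
    rw [← hadj huv]
    simpa [σ] using adj_alternatingStep h2 hf c (f.symm u)
  refine ⟨_, _, isPM_fromRel_of_involutive (hσ 0) (hfix 0),
    isPM_fromRel_of_involutive (hσ 1) (hfix 1), hle 0, hle 1, ?_⟩
  refine SimpleGraph.disjoint_left.2 fun u v h h' => alternatingStep_zero_ne_one h2 hn (f.symm u) ?_
  exact f.injective ((hadj h).trans (hadj h').symm)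

lemma degree_iSup_le_card {V ι : Type} [Fintype ι] {M : ι → SimpleGraph V}
    (hM : ∀ i, IsPM (M i)) (v : V) [Fintype ((⨆ i, M i).neighborSet v)] :
    (⨆ i, M i).degree v ≤ Fintype.card ι := by
  choose w hw using fun i => (hM i v).exists
  rw [← SimpleGraph.card_neighborSet_eq_degree]
  refine Fintype.card_le_of_surjective
    (fun i => ⟨w i, SimpleGraph.iSup_adj.2 ⟨i, hw i⟩⟩) fun ⟨u, hu⟩ => ?_
  obtain ⟨i, hi⟩ := SimpleGraph.iSup_adj.1 hu
  exact ⟨i, Subtype.ext ((hM i v).unique (hw i) hi)⟩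

theorem matching_two_more_rounds_general (n : ℕ) (hn : 4 ≤ n) (heven : Even n)
    (M : Fin (n / 2 - 1) → SimpleGraph (Fin n))
    (hM : ∀ i, IsPM (M i)) :
    ∃ N N' : SimpleGraph (Fin n), IsPM N ∧ IsPM N' ∧
      (∀ i, Disjoint N.edgeSet (M i).edgeSet) ∧
      (∀ i, Disjoint N'.edgeSet (M i).edgeSet) ∧
      Disjoint N.edgeSet N'.edgeSet := by
  classical
  have : NeZero n := ⟨by omega⟩
  set F := (⨆ i, M i)ᶜ
  have hdeg (v : Fin n) : n ≤ 2 * F.degree v := by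
    have := degree_iSup_le_card hM v
    rw [Fintype.card_fin] at this
    rw [SimpleGraph.degree_compl, Fintype.card_fin]
    omega
  obtain ⟨f, hf⟩ := exists_equiv_adj_add_one F (Fintype.card_fin n) hdeg
  obtain ⟨N, N', hN, hN', hNF, hN'F, hNN'⟩ :=
    exists_disjoint_isPM_le_of_adj_add_one (by omega) heven f hf
  have hFM (i : Fin (n / 2 - 1)) : Disjoint F (M i) := disjoint_compl_left.mono_right (le_iSup M i)
  simp only [SimpleGraph.disjoint_edgeSet]
  exact ⟨N, N', hN, hN', fun i => (hFM i).mono_left hNF, fun i => (hFM i).mono_left hN'F, hNN'⟩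

/-- Every tournament of `n/2 - 1` rounds (pairwise edge-disjoint perfect
matchings of `K_n`, `n ≥ 4` even) can be extended by two further rounds:
there are two perfect matchings `N` and `N'` of `K_n` such that
`M_1, …, M_{n/2-1}, N, N'` are pairwise edge-disjoint. -/
theorem matching_two_more_rounds (n : ℕ) (hn : 4 ≤ n) (heven : Even n)
    (M : Fin (n / 2 - 1) → SimpleGraph (Fin n))
    (hM : ∀ i, IsPM (M i))
    (hdisj : ∀ i j : Fin (n / 2 - 1), i ≠ j → Disjoint (M i).edgeSet (M j).edgeSet) :
    ∃ N N' : SimpleGraph (Fin n), IsPM N ∧ IsPM N' ∧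
      (∀ i, Disjoint N.edgeSet (M i).edgeSet) ∧
      (∀ i, Disjoint N'.edgeSet (M i).edgeSet) ∧
      Disjoint N.edgeSet N'.edgeSet :=
  matching_two_more_rounds_general n hn heven M hM
end

section
/- Let k ≥ 3 and let n be a positive integer divisible by k. Then for any family F_1, …, F_r of pairwise edge-disjoint K_k-factors of the complete graph K_n, one has (2k² − 3k − 1) · max(1, ⌊n/(k(k−1))⌋) ≥ (k−1) · r. In other words, the number of rounds guaranteed by the greedy algorithm is at least a (k−1)/(2k²−3k−1) fraction of the maximum possible number of rounds. -/
/-- Two vertices lie in a common block of the partition `P`. -/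
def SameBlock {n : ℕ} (P : Finpartition (Finset.univ : Finset (Fin n)))
    (u v : Fin n) : Prop :=
  ∃ b ∈ P.parts, u ∈ b ∧ v ∈ b

/-- A `K_k`-factor of `K_n`: a partition of the vertex set into blocks of size `k`. -/
def IsKkFactor {n : ℕ} (k : ℕ) (P : Finpartition (Finset.univ : Finset (Fin n))) : Prop :=
  ∀ b ∈ P.parts, b.card = k

/-- Two rounds (partitions) are edge-disjoint: no two distinct vertices lie in a
common block in both of them. -/
def RoundsEdgeDisjoint {n : ℕ} (P Q : Finpartition (Finset.univ : Finset (Fin n))) : Prop :=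
  ∀ u v : Fin n, u ≠ v → SameBlock P u v → ¬ SameBlock Q u v

/-!
Fix a vertex `v`. In every round the other members of `v`'s block form a set of `k - 1`
vertices, and edge-disjointness makes these sets pairwise disjoint subsets of the remaining
`n - 1` vertices, so `(k - 1) r ≤ n - 1`. Writing `n = k e` and `e = (k - 1) q + s` with
`s ≤ k - 2`, one gets `n - 1 ≤ k (k - 1) q + (k² - 2k - 1) ≤ (2k² - 3k - 1) max(1, q)`,
and `q = ⌊n / (k (k - 1))⌋`.
-/

theorem sameBlock_iff_mem_part {n : ℕ} (P : Finpartition (Finset.univ : Finset (Fin n)))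
    (u v : Fin n) : SameBlock P u v ↔ u ∈ P.part v :=
  P.mem_part_iff_exists.symm

theorem IsKkFactor.card_part {n k : ℕ} {P : Finpartition (Finset.univ : Finset (Fin n))}
    (hP : IsKkFactor k P) (v : Fin n) : (P.part v).card = k :=
  hP _ (P.part_mem.2 (Finset.mem_univ v))

theorem RoundsEdgeDisjoint.disjoint_erase_part {n : ℕ}
    {P Q : Finpartition (Finset.univ : Finset (Fin n))} (h : RoundsEdgeDisjoint P Q)
    (v : Fin n) : Disjoint ((P.part v).erase v) ((Q.part v).erase v) := by
  refine Finset.disjoint_left.2 fun u huP huQ => ?_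
  obtain ⟨huv, huP⟩ := Finset.mem_erase.1 huP
  exact h u v huv ((sameBlock_iff_mem_part P u v).2 huP)
    ((sameBlock_iff_mem_part Q u v).2 (Finset.mem_of_mem_erase huQ))

theorem sub_one_mul_le_sub_one_of_edgeDisjoint {k n r : ℕ}
    (F : Fin r → Finpartition (Finset.univ : Finset (Fin n)))
    (hF : ∀ i, IsKkFactor k (F i))
    (hdisj : ∀ i j : Fin r, i ≠ j → RoundsEdgeDisjoint (F i) (F j)) (v : Fin n) :
    (k - 1) * r ≤ n - 1 := by
  set N : Fin r → Finset (Fin n) := fun i => ((F i).part v).erase v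
  have hcard : ∀ i, (N i).card = k - 1 := fun i => by
    rw [Finset.card_erase_of_mem ((F i).mem_part_self.2 (Finset.mem_univ v)),
      (hF i).card_part v]
  have hN : (Finset.univ : Finset (Fin r)).biUnion N ⊆ Finset.univ.erase v :=
    fun u hu => by
      obtain ⟨i, -, hu⟩ := Finset.mem_biUnion.1 hu
      exact Finset.mem_erase.2 ⟨Finset.ne_of_mem_erase hu, Finset.mem_univ u⟩
  calc (k - 1) * r = ((Finset.univ : Finset (Fin r)).biUnion N).card := by
        rw [Finset.card_biUnion fun i _ j _ hij => (hdisj i j hij).disjoint_erase_part v,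
          Finset.sum_const_nat fun i _ => hcard i, Finset.card_univ, Fintype.card_fin, mul_comm]
    _ ≤ (Finset.univ.erase v).card := Finset.card_le_card hN
    _ = n - 1 := by simp

theorem mul_sub_one_le_mul_max_div {k e : ℕ} (hk : 3 ≤ k) :
    k * e - 1 ≤ (2 * k ^ 2 - 3 * k - 1) * max 1 (e / (k - 1)) := by
  obtain ⟨c, rfl⟩ : ∃ c, k = c + 3 := ⟨k - 3, by omega⟩
  set q := e / (c + 3 - 1)
  have hcoeff : 2 * (c + 3) ^ 2 - 3 * (c + 3) - 1 = (c + 3) * (c + 2) + (c ^ 2 + 4 * c + 2) := by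
    ring_nf; omega
  have he : e ≤ (c + 2) * q + (c + 1) := by
    have := Nat.div_add_mod e (c + 2)
    have := Nat.mod_lt e (show 0 < c + 2 by omega)
    simp only [q, show c + 3 - 1 = c + 2 from rfl]
    omega
  have hq : q ≤ max 1 q := le_max_right 1 q
  have h1 : 1 ≤ max 1 q := le_max_left 1 q
  suffices (c + 3) * e ≤ ((c + 3) * (c + 2) + (c ^ 2 + 4 * c + 2)) * max 1 q + 1 by
    rw [hcoeff]; omega
  nlinarith

/-- For any family `F_1, …, F_r` of pairwise edge-disjoint `K_k`-factors of
`K_n` (`k ≥ 3`, `k ∣ n`) one has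
`(2k² − 3k − 1) · max(1, ⌊n/(k(k−1))⌋) ≥ (k−1) · r`: the greedy guarantee is
at least a `(k−1)/(2k²−3k−1)` fraction of the optimum number of rounds. -/
theorem greedy_social_golfer_approximation (k n : ℕ) (hk : 3 ≤ k) (hn : 0 < n)
    (hkn : k ∣ n) (r : ℕ)
    (F : Fin r → Finpartition (Finset.univ : Finset (Fin n)))
    (hF : ∀ i, IsKkFactor k (F i))
    (hdisj : ∀ i j : Fin r, i ≠ j → RoundsEdgeDisjoint (F i) (F j)) :
    (k - 1) * r ≤ (2 * k ^ 2 - 3 * k - 1) * max 1 (n / (k * (k - 1))) := by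
  obtain ⟨e, rfl⟩ := hkn
  rw [Nat.mul_div_mul_left e (k - 1) (by omega)]
  exact (sub_one_mul_le_sub_one_of_edgeDisjoint F hF hdisj ⟨0, hn⟩).trans
    (mul_sub_one_le_mul_max_div hk)
end

section
/- Let G be a finite simple graph on n vertices and let m be a positive integer with m ∣ n. Suppose that every connected component C of G admits a proper vertex coloring with m colors in which every color class (within C) has size ⌊|C|/m⌋ or ⌈|C|/m⌉. Then G admits a proper vertex coloring with m colors in which every color class has size exactly n/m. -/
/-!
Call a family of natural numbers balanced if its values lie in `{q, q + 1}` for some `q`.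
The sum of a balanced family and a suitably permuted balanced family is again balanced: put the
large entries of the second on the small entries of the first. Gluing the equitable colorings
of the components one at a time, recoloring each by such a permutation, keeps the class sizes
balanced; when `m ∣ n`, balanced class sizes summing to `n` are all equal to `n / m`.
-/

open Finset

def IsBalanced {ι : Type*} (a : ι → ℕ) : Prop :=
  ∃ q, ∀ i, a i = q ∨ a i = q + 1

lemma Finset.exists_card_eq_and_subset_or_superset {ι : Type*} [Fintype ι]
    (s : Finset ι) {n : ℕ} (hn : n ≤ Fintype.card ι) :
    ∃ t : Finset ι, #t = n ∧ (t ⊆ s ∨ s ⊆ t) := by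
  rcases le_total n #s with hns | hsn
  · obtain ⟨t, hts, ht⟩ := exists_subset_card_eq hns
    exact ⟨t, ht, .inl hts⟩
  · obtain ⟨t, hst, -, ht⟩ := exists_subsuperset_card_eq (subset_univ s) hsn hn
    exact ⟨t, ht, .inr hst⟩

namespace IsBalanced

variable {ι : Type*} {a b : ι → ℕ}

lemma of_forall_eq_div_or_eq_ceil {k m : ℕ} (h : ∀ i, a i = k / m ∨ a i = (k + m - 1) / m) :
    IsBalanced a := by
  rcases Nat.eq_zero_or_pos m with rfl | hm
  · exact ⟨0, fun i => .inl (by simpa using h i)⟩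
  have hlo : k / m ≤ (k + m - 1) / m := Nat.div_le_div_right (by omega)
  have hhi : (k + m - 1) / m ≤ k / m + 1 :=
    calc (k + m - 1) / m ≤ (k + m) / m := Nat.div_le_div_right (by omega)
      _ = k / m + 1 := Nat.add_div_right k hm
  exact ⟨k / m, fun i => by have := h i; omega⟩

theorem exists_perm_add [Fintype ι] (ha : IsBalanced a) (hb : IsBalanced b) :
    ∃ σ : Equiv.Perm ι, IsBalanced fun i => a i + b (σ i) := by
  classical
  obtain ⟨q, hq⟩ := ha
  obtain ⟨p, hp⟩ := hb
  set small := univ.filter fun i => a i = q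
  set large := univ.filter fun i => b i = p + 1
  obtain ⟨D, hD, hDS⟩ := small.exists_card_eq_and_subset_or_superset (card_le_univ large)
  obtain ⟨σ, hσ⟩ := Equiv.Perm.exists_map_finset_eq D large hD
  have hlarge (i : ι) : b (σ i) = p + 1 ↔ i ∈ D := by
    have := mem_map' σ.toEmbedding (a := i) (s := D)
    rw [hσ] at this
    simpa [large] using this
  refine ⟨σ, ?_⟩
  rcases hDS with hDS | hSD
  · refine ⟨q + p, fun i => ?_⟩
    have := hq i
    have := hp (σ i)
    by_cases hi : i ∈ D
    · have := (hlarge i).2 hi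
      have : a i = q := by simpa [small] using hDS hi
      dsimp only; omega
    · have := (hlarge i).not.2 hi
      dsimp only; omega
  · refine ⟨q + p + 1, fun i => ?_⟩
    have := hq i
    have := hp (σ i)
    by_cases hi : a i = q
    · have := (hlarge i).2 (hSD (by simpa [small] using hi))
      dsimp only; omega
    · dsimp only; omega

theorem eq_of_sum_eq_card_mul [Fintype ι] (ha : IsBalanced a) {c : ℕ}
    (h : ∑ i, a i = Fintype.card ι * c) (i : ι) : a i = c := by
  obtain ⟨q, hq⟩ := ha
  have hcard : 0 < Fintype.card ι := Fintype.card_pos_iff.2 ⟨i⟩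
  have hlo : ∀ j ∈ univ, q ≤ a j := fun j _ => by have := hq j; omega
  have hhi : ∀ j ∈ univ, a j ≤ q + 1 := fun j _ => by have := hq j; omega
  have hqc : q ≤ c := by
    refine Nat.le_of_mul_le_mul_left ?_ hcard
    simpa [h] using sum_le_sum hlo
  have hcq : c ≤ q + 1 := by
    refine Nat.le_of_mul_le_mul_left ?_ hcard
    simpa [h] using sum_le_sum hhi
  obtain rfl | rfl : c = q ∨ c = q + 1 := by omega
  · exact ((sum_eq_sum_iff_of_le hlo).1 (by simp [h]) i (mem_univ i)).symm
  · exact (sum_eq_sum_iff_of_le hhi).1 (by simp [h]) i (mem_univ i)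

end IsBalanced

lemma Fintype.sum_ncard_fiber_eq_card {V ι : Type*} [Fintype V] [Fintype ι] (f : V → ι) :
    ∑ j, {v | f v = j}.ncard = Fintype.card V := by
  classical
  simp_rw [Set.ncard_eq_toFinset_card', Set.toFinset_ofPred, ← card_univ]
  exact (card_eq_sum_card_fiberwise fun v _ => mem_univ (f v)).symm

namespace SimpleGraph

variable {V : Type*} (G : SimpleGraph V) (m : ℕ)

def HasEquitableColoringOn (S : Set V) : Prop :=
  ∃ f : V → Fin m, (∀ u v, u ∈ S → G.Adj u v → f u ≠ f v) ∧
    IsBalanced fun j => {v ∈ S | f v = j}.ncard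

variable {G m}

theorem HasEquitableColoringOn.union [Finite V] {S T : Set V} (hS : G.HasEquitableColoringOn m S)
    (hT : G.HasEquitableColoringOn m T) (hST : Disjoint S T)
    (hclosed : ∀ u v, u ∈ S → G.Adj u v → v ∈ S) : G.HasEquitableColoringOn m (S ∪ T) := by
  classical
  obtain ⟨f, hf, hfbal⟩ := hS
  obtain ⟨g, hg, hgbal⟩ := hT
  obtain ⟨σ, hσ⟩ := hfbal.exists_perm_add hgbal
  refine ⟨fun v => if v ∈ S then f v else σ.symm (g v), ?_, ?_⟩
  · rintro u v (hu | hu) huv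
    · simpa [hu, hclosed u v hu huv] using hf u v hu huv
    · have hu' : u ∉ S := Set.disjoint_right.1 hST hu
      have hv' : v ∉ S := fun hv => hu' (hclosed v u hv huv.symm)
      simpa [hu', hv'] using hg u v hu huv
  · convert hσ using 2 with j
    have hsplit : {v ∈ S ∪ T | (if v ∈ S then f v else σ.symm (g v)) = j} =
        {v ∈ S | f v = j} ∪ {v ∈ T | g v = σ j} := by
      ext v
      by_cases hv : v ∈ S
      · simp [hv, Set.disjoint_left.1 hST hv]
      · simp [hv, Equiv.symm_apply_eq]
    rw [hsplit, Set.ncard_union_eq (hST.mono (Set.sep_subset _ _) (Set.sep_subset _ _))]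

theorem hasEquitableColoringOn_of_components [Finite V] (hm : 0 < m)
    (h : ∀ c : G.ConnectedComponent, G.HasEquitableColoringOn m c.supp)
    (s : Finset G.ConnectedComponent) :
    G.HasEquitableColoringOn m {v | G.connectedComponentMk v ∈ s} := by
  classical
  induction s using Finset.induction_on with
  | empty => exact ⟨fun _ => ⟨0, hm⟩, by simp, 0, by simp⟩
  | insert c s hc ih =>
    have hunion : {v | G.connectedComponentMk v ∈ insert c s} =
        c.supp ∪ {v | G.connectedComponentMk v ∈ s} := by
      ext v; simp [ConnectedComponent.mem_supp_iff]
    rw [hunion]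
    refine (h c).union ih (Set.disjoint_left.2 fun v hv hvs => hc ?_)
      fun u v hu => c.mem_supp_of_adj_mem_supp hu
    exact (c.mem_supp_iff v).1 hv ▸ hvs

end SimpleGraph

/-- If every connected component `C` of a finite graph `G` on `n` vertices
admits a proper `m`-coloring whose color classes (within `C`) all have size
`⌊|C|/m⌋` or `⌈|C|/m⌉`, and `m ∣ n`, then `G` admits a proper `m`-coloring in
which every color class has size exactly `n/m`. -/
theorem equitable_coloring_of_components {V : Type} [Fintype V]
    (G : SimpleGraph V) (m : ℕ) (hm : 0 < m) (hdvd : m ∣ Fintype.card V)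
    (hcomp : ∀ c : G.ConnectedComponent, ∃ f : V → Fin m,
      (∀ u v : V, u ∈ c.supp → G.Adj u v → f u ≠ f v) ∧
      (∀ j : Fin m,
        {v ∈ c.supp | f v = j}.ncard = c.supp.ncard / m ∨
        {v ∈ c.supp | f v = j}.ncard = (c.supp.ncard + m - 1) / m)) :
    ∃ f : V → Fin m, (∀ u v : V, G.Adj u v → f u ≠ f v) ∧
      ∀ j : Fin m, {v | f v = j}.ncard = Fintype.card V / m := by
  have hequitable (c : G.ConnectedComponent) : G.HasEquitableColoringOn m c.supp := by
    obtain ⟨f, hf, hsize⟩ := hcomp c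
    exact ⟨f, hf, .of_forall_eq_div_or_eq_ceil hsize⟩
  obtain ⟨f, hf, hbal⟩ := G.hasEquitableColoringOn_of_components hm hequitable Finset.univ
  simp only [Finset.mem_univ, Set.ofPred_true, Set.mem_univ, true_and] at hf hbal
  refine ⟨f, fun u v => hf u v trivial, fun j => hbal.eq_of_sum_eq_card_mul ?_ j⟩
  rw [Fintype.sum_ncard_fiber_eq_card, Fintype.card_fin, Nat.mul_div_cancel' hdvd]
end

section
/- Assume the Equitable Δ-Coloring Conjecture holds. Let k ≥ 3 and let n be a positive integer divisible by k with n > k(k−1). Then every family F_1, …, F_{⌊n/(k(k−1))⌋ − 1} of pairwise edge-disjoint K_k-factors of the complete graph K_n can be extended by two further rounds: there exist K_k-factors F and F' of K_n such that F_1, …, F_{⌊n/(k(k−1))⌋ − 1}, F, F' are pairwise edge-disjoint. In particular, by choosing round ⌊n/(k(k−1))⌋ carefully, there always exists a tournament with ⌊n/(k(k−1))⌋ + 1 rounds. -/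
/-- A graph is equitably `l`-colorable: there is a proper coloring with `l`
colors whose color classes pairwise differ in size by at most one. -/
def EquitablyColorable {V : Type} (G : SimpleGraph V) (l : ℕ) : Prop :=
  ∃ f : V → Fin l, (∀ u v : V, G.Adj u v → f u ≠ f v) ∧
    ∀ j j' : Fin l, {v | f v = j}.ncard ≤ {v | f v = j'}.ncard + 1

/-- The Equitable Δ-Coloring Conjecture: a connected finite graph `G` with
maximum degree at most `l` has no equitable `l`-coloring iff `G = K_{l+1}`,
or `l = 2` and `G` is an odd cycle, or `l` is odd and `G = K_{l,l}`. -/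
def EDCC : Prop :=
  ∀ (V : Type) [Fintype V] (G : SimpleGraph V) (l : ℕ),
    G.Connected → (∀ v : V, (G.neighborSet v).ncard ≤ l) →
    (¬ EquitablyColorable G l ↔
      Nonempty (G ≃g (⊤ : SimpleGraph (Fin (l + 1)))) ∨
      (l = 2 ∧ ∃ m : ℕ, 3 ≤ m ∧ Odd m ∧ Nonempty (G ≃g SimpleGraph.cycleGraph m)) ∨
      (Odd l ∧ Nonempty (G ≃g completeBipartiteGraph (Fin l) (Fin l))))

/-!
A new round is the same thing as a proper colouring, with `ℓ = n / k` colours and all colour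
classes of size `k`, of the graph `H` whose edges are the pairs already met. `H` is the union of
`⌊n/(k(k-1))⌋ - 1` disjoint unions of `K_k`'s, so its maximum degree is at most `ℓ - (k - 1)`.

EΔCC colours each component of such a graph equitably, unless it is `K_{ℓ+1}` or `K_{ℓ,ℓ}`;
permuting the colours inside each component then balances the global colour classes, which
therefore all have size `k`. For the first round, `K_{ℓ+1}` and `K_{ℓ,ℓ}` are `ℓ`-regular, hence
not components of `H`. For the second round, apply the same to `H` plus the cliques on the
classes of the first round: its degree is at most `ℓ`, and every component contains a triangle
(`k ≥ 3`), so none is `K_{ℓ,ℓ}`. Components equal to `K_{ℓ+1}` are removed beforehand by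
swapping the colours of a vertex inside such a component and a vertex outside it.
-/

open Finset

def IsEquitable {ι : Type*} (c : ι → ℕ) : Prop := ∀ i j, c i ≤ c j + 1

theorem Equiv.Perm.exists_mem_iff_mem {ι : Type*} [Fintype ι] [DecidableEq ι] {s t : Finset ι}
    (h : #s = #t) : ∃ σ : Equiv.Perm ι, ∀ i, σ i ∈ t ↔ i ∈ s := by
  refine ⟨(equivOfCardEq h).extendSubtype, fun i => ⟨fun hi => ?_, fun hi => ?_⟩⟩
  · by_contra his
    exact Equiv.extendSubtype_not_mem _ i his hi
  · exact Equiv.extendSubtype_mem _ i hi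

theorem Fintype.card_eq_sum_card_filter {V ι : Type*} [Fintype V] [Fintype ι] [DecidableEq ι]
    (g : V → ι) : Fintype.card V = ∑ j, #{v | g v = j} := by
  rw [← card_univ]
  exact card_eq_sum_card_fiberwise fun _ _ => mem_univ _

theorem card_filter_comp_equiv {V W β : Type*} [Fintype V] [Fintype W] [DecidableEq β]
    (g : W → β) (σ : V ≃ W) (j : β) : #{v | g (σ v) = j} = #{w | g w = j} :=
  card_bij' (fun v _ => σ v) (fun w _ => σ.symm w) (by simp) (by simp) (by simp) (by simp)

namespace IsEquitable

variable {ι : Type*} {c : ι → ℕ}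

theorem iff_exists_bounds : IsEquitable c ↔ ∃ m, ∀ i, m ≤ c i ∧ c i ≤ m + 1 := by
  refine ⟨fun h => ?_, fun ⟨m, hm⟩ i j => by have := hm i; have := hm j; omega⟩
  cases isEmpty_or_nonempty ι
  · exact ⟨0, isEmptyElim⟩
  obtain ⟨i₀, -, hmin⟩ :=
    exists_minimalFor_of_wellFoundedLT (fun _ => True) c ⟨Classical.arbitrary ι, trivial⟩
  refine ⟨c i₀, fun i => ⟨?_, h i i₀⟩⟩
  by_contra! hlt
  exact hlt.not_ge (hmin trivial hlt.le)

theorem eq_of_sum_eq [Fintype ι] (h : IsEquitable c) {k : ℕ}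
    (hsum : ∑ i, c i = Fintype.card ι * k) (i : ι) : c i = k := by
  by_contra hne
  rcases Nat.lt_or_gt_of_ne hne with hlt | hgt
  · have : ∑ j, c j < ∑ _j : ι, k :=
      sum_lt_sum (fun j _ => by have := h j i; omega) ⟨i, mem_univ i, hlt⟩
    simp [hsum] at this
  · have : ∑ _j : ι, k < ∑ j, c j :=
      sum_lt_sum (fun j _ => by have := h i j; omega) ⟨i, mem_univ i, hgt⟩
    simp [hsum] at this

variable [Fintype ι] [DecidableEq ι]

/-- Pair the large values of `a` with the small values of `b`. -/
theorem exists_perm_add {a b : ι → ℕ} (ha : IsEquitable a) (hb : IsEquitable b) :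
    ∃ σ : Equiv.Perm ι, IsEquitable fun i => a i + b (σ i) := by
  obtain ⟨p, hp⟩ := iff_exists_bounds.mp ha
  obtain ⟨q, hq⟩ := iff_exists_bounds.mp hb
  set S : Finset ι := {i | a i = p}
  set T : Finset ι := {i | b i = q + 1}
  obtain ⟨U, hU, hUT⟩ : ∃ U : Finset ι, (U ⊆ S ∨ S ⊆ U) ∧ #U = #T := by
    rcases le_total #T #S with h | h
    · obtain ⟨U, hUS, hU⟩ := exists_subset_card_eq h
      exact ⟨U, .inl hUS, hU⟩
    · obtain ⟨U, hSU, -, hU⟩ := exists_subsuperset_card_eq (subset_univ S) h (card_le_univ T)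
      exact ⟨U, .inr hSU, hU⟩
  obtain ⟨σ, hσ⟩ := Equiv.Perm.exists_mem_iff_mem hUT
  refine ⟨σ, iff_exists_bounds.mpr ?_⟩
  have hS : ∀ i, i ∈ S ↔ a i = p := by simp [S]
  have hT : ∀ i, σ i ∈ T ↔ b (σ i) = q + 1 := by simp [T]
  rcases hU with hUS | hSU
  · refine ⟨p + q, fun i => ?_⟩
    have : b (σ i) = q + 1 → a i = p := fun h => (hS i).mp (hUS ((hσ i).mp ((hT i).mpr h)))
    have := hp i; have := hq (σ i); omega
  · refine ⟨p + q + 1, fun i => ?_⟩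
    have : a i = p → b (σ i) = q + 1 := fun h => (hT i).mp ((hσ i).mpr (hSU ((hS i).mpr h)))
    have := hp i; have := hq (σ i); omega

theorem exists_perm_sum {C : Type*} [DecidableEq C] {a : C → ι → ℕ} (s : Finset C)
    (ha : ∀ c ∈ s, IsEquitable (a c)) :
    ∃ σ : C → Equiv.Perm ι, IsEquitable fun j => ∑ c ∈ s, a c (σ c j) := by
  induction s using Finset.induction_on with
  | empty => exact ⟨fun _ => 1, fun _ _ => by simp⟩
  | @insert c₀ s hc₀ ih =>
    obtain ⟨σ, hσ⟩ := ih fun c hc => ha c (mem_insert_of_mem hc)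
    obtain ⟨τ, hτ⟩ := hσ.exists_perm_add (ha c₀ (mem_insert_self c₀ s))
    refine ⟨Function.update σ c₀ τ, fun j j' => ?_⟩
    have hs : ∀ j, ∑ c ∈ s, a c (Function.update σ c₀ τ c j) = ∑ c ∈ s, a c (σ c j) :=
      fun j => sum_congr rfl fun c hc => by
        rw [Function.update_of_ne (ne_of_mem_of_not_mem hc hc₀)]
    simpa [sum_insert hc₀, hs, add_comm] using hτ j j'

theorem exists_perm_card_filter {V C : Type*} [Fintype V] [Fintype C] [DecidableEq C]
    (π : V → C) (f : V → ι) (h : ∀ c, IsEquitable fun j => #{v | π v = c ∧ f v = j}) :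
    ∃ σ : C → Equiv.Perm ι, IsEquitable fun j => #{v | (σ (π v)) (f v) = j} := by
  obtain ⟨σ, hσ⟩ := exists_perm_sum univ fun c _ => h c
  refine ⟨fun c => (σ c).symm, fun j j' => ?_⟩
  have hfib : ∀ j, #{v | (σ (π v)).symm (f v) = j} = ∑ c, #{v | π v = c ∧ f v = σ c j} := by
    intro j
    rw [card_eq_sum_card_fiberwise (f := π) (t := univ) fun _ _ => mem_univ _]
    refine sum_congr rfl fun c _ => congrArg card ?_
    ext v
    simp only [mem_filter, mem_univ, true_and, Equiv.symm_apply_eq]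
    constructor
    · rintro ⟨h, rfl⟩; exact ⟨rfl, h⟩
    · rintro ⟨rfl, h⟩; exact ⟨h, rfl⟩
  simpa only [hfib] using hσ j j'

end IsEquitable

namespace SimpleGraph

variable {V : Type*}

def fiberGraph {α : Type*} (g : V → α) : SimpleGraph V where
  Adj u v := u ≠ v ∧ g u = g v

theorem ncard_neighborSet_fiberGraph [Fintype V] {α : Type*} [DecidableEq α] (g : V → α)
    (v : V) : ((fiberGraph g).neighborSet v).ncard = #{x | g x = g v} - 1 := by
  classical
  have : (fiberGraph g).neighborSet v = ↑((({x | g x = g v} : Finset V)).erase v) := by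
    ext x
    simp [fiberGraph, eq_comm, and_comm]
  rw [this, Set.ncard_coe_finset, card_erase_of_mem (by simp)]

theorem ncard_neighborSet_sup_le [Finite V] (G G' : SimpleGraph V) (v : V) :
    ((G ⊔ G').neighborSet v).ncard ≤ (G.neighborSet v).ncard + (G'.neighborSet v).ncard := by
  rw [neighborSet_sup]
  exact Set.ncard_union_le _ _

theorem ncard_neighborSet_iSup_le [Finite V] {ι : Type*} [Fintype ι] (G : ι → SimpleGraph V)
    (v : V) : ((⨆ i, G i).neighborSet v).ncard ≤ ∑ i, ((G i).neighborSet v).ncard := by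
  rw [neighborSet_iSup]
  exact Set.ncard_iUnion_le_of_fintype _

theorem ncard_neighborSet_top [Fintype V] (v : V) :
    ((⊤ : SimpleGraph V).neighborSet v).ncard = Fintype.card V - 1 := by
  classical
  simp [neighborSet_top, Set.ncard_eq_toFinset_card', card_compl]

theorem ncard_neighborSet_completeBipartiteGraph_inl {α β : Type*} (a : α) :
    ((completeBipartiteGraph α β).neighborSet (.inl a)).ncard = Nat.card β := by
  have : (completeBipartiteGraph α β).neighborSet (.inl a) = Set.range .inr := by
    ext (x | x) <;> simp
  rw [this, Set.ncard_range_of_injective Sum.inr_injective]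

theorem Copy.ncard_neighborSet_le {W : Type*} [Finite W] {K : SimpleGraph V}
    {G : SimpleGraph W} (f : Copy K G) (v : V) :
    (K.neighborSet v).ncard ≤ (G.neighborSet (f v)).ncard := by
  simpa only [Nat.card_coe_set_eq] using
    Nat.card_le_card_of_injective _ (f.mapNeighborSet v).injective

theorem isEmpty_iso_induce_of_ncard_neighborSet_lt [Finite V] {W : Type*} {G : SimpleGraph V}
    {K : SimpleGraph W} {ℓ : ℕ} (hG : ∀ v, (G.neighborSet v).ncard < ℓ) (w : W)
    (hw : ℓ ≤ (K.neighborSet w).ncard) (s : Set V) : IsEmpty (G.induce s ≃g K) :=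
  ⟨fun e => (hw.trans (((Copy.induce G s).comp e.symm.toCopy).ncard_neighborSet_le w)).not_gt
    (hG _)⟩

theorem ConnectedComponent.isEmpty_iso_completeBipartiteGraph {G : SimpleGraph V}
    (c : G.ConnectedComponent) {α β : Type*} {x y z : V} (hx : x ∈ c) (hxy : G.Adj x y)
    (hyz : G.Adj y z) (hxz : G.Adj x z) :
    IsEmpty (c.toSimpleGraph ≃g completeBipartiteGraph α β) := by
  refine ⟨fun e => ?_⟩
  have hy := c.mem_supp_of_adj_mem_supp hx hxy
  have hz := c.mem_supp_of_adj_mem_supp hx hxz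
  let C : c.toSimpleGraph.Coloring Bool := (CompleteBipartiteGraph.bicoloring α β).comp e.toHom
  have h₁ : C ⟨x, hx⟩ ≠ C ⟨y, hy⟩ := C.valid hxy
  have h₂ : C ⟨y, hy⟩ ≠ C ⟨z, hz⟩ := C.valid hyz
  have h₃ : C ⟨x, hx⟩ ≠ C ⟨z, hz⟩ := C.valid hxz
  revert h₁ h₂ h₃
  cases C ⟨x, hx⟩ <;> cases C ⟨y, hy⟩ <;> cases C ⟨z, hz⟩ <;> simp

theorem isEmpty_iso_completeBipartiteGraph_of_fiberGraph_le [Fintype V] {α β γ : Type*}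
    [DecidableEq α] {G : SimpleGraph V} {g : V → α} (hle : fiberGraph g ≤ G)
    (hg : ∀ v, 3 ≤ #{x | g x = g v}) (c : G.ConnectedComponent) :
    IsEmpty (c.toSimpleGraph ≃g completeBipartiteGraph β γ) := by
  classical
  refine c.ind fun v => ?_
  obtain ⟨y, z, hy, hz, hyz⟩ := one_lt_card_iff.mp
    (show 1 < #(({x | g x = g v} : Finset V).erase v) by
      rw [card_erase_of_mem (by simp)]; have := hg v; omega)
  simp only [mem_erase, mem_filter, mem_univ, true_and] at hy hz
  exact ConnectedComponent.isEmpty_iso_completeBipartiteGraph _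
    ConnectedComponent.connectedComponentMk_mem (hle ⟨hy.1.symm, hy.2.symm⟩)
    (hle ⟨hyz, hy.2.trans hz.2.symm⟩) (hle ⟨hz.1.symm, hz.2.symm⟩)

/-- `D` spans a connected component of `G` which is a complete graph on `m` vertices. -/
def IsIsolatedNClique (G : SimpleGraph V) (m : ℕ) (D : Finset V) : Prop :=
  G.IsNClique m D ∧ ∀ ⦃x y⦄, x ∈ D → G.Adj x y → y ∈ D

theorem ConnectedComponent.exists_isIsolatedNClique_of_iso [Fintype V] {G : SimpleGraph V}
    (c : G.ConnectedComponent) {m : ℕ} (e : c.toSimpleGraph ≃g (⊤ : SimpleGraph (Fin m))) :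
    ∃ D, G.IsIsolatedNClique m D := by
  classical
  refine ⟨c.supp.toFinset, ⟨⟨fun x hx y hy hxy => ?_, ?_⟩, fun x y hx hxy => ?_⟩⟩
  · simp only [Set.coe_toFinset] at hx hy
    have : e ⟨x, hx⟩ ≠ e ⟨y, hy⟩ := fun h => hxy (congrArg Subtype.val (e.injective h))
    exact e.map_adj_iff.mp this
  · rw [Set.toFinset_card, ← Nat.card_eq_fintype_card]
    exact (Nat.card_congr e.toEquiv).trans (Nat.card_fin m)
  · rw [Set.mem_toFinset] at hx ⊢
    exact c.mem_supp_of_adj_mem_supp hx hxy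

section Swap

variable {H : SimpleGraph V} {α : Type*} {g : V → α} {m : ℕ} {D : Finset V}

theorem IsIsolatedNClique.not_adj_sup_fiberGraph
    (hD : (H ⊔ fiberGraph g).IsIsolatedNClique m D) {x y : V} (hx : x ∈ D) (hy : y ∉ D) :
    ¬ H.Adj x y ∧ g x ≠ g y := by
  have hxy : x ≠ y := ne_of_mem_of_not_mem hx hy
  exact ⟨fun h => hy (hD.2 hx (Or.inl h)), fun h => hy (hD.2 hx (Or.inr ⟨hxy, h⟩))⟩

theorem IsIsolatedNClique.adj_of_ne_sup_fiberGraph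
    (hD : (H ⊔ fiberGraph g).IsIsolatedNClique m D) {x y : V} (hx : x ∈ D) (hy : y ∈ D)
    (hxy : g x ≠ g y) : H.Adj x y := by
  rcases hD.1.isClique hx hy (fun h => hxy (h ▸ rfl)) with h | ⟨-, h⟩
  · exact h
  · exact absurd h hxy

variable [DecidableEq V] {u w : V}

/-- The `H`-neighbours of `u` lie in `D` and those of `w` outside `D`, while the colour classes
of `u` and `w` lie inside and outside `D`, respectively. -/
theorem IsIsolatedNClique.comp_swap_ne (hD : (H ⊔ fiberGraph g).IsIsolatedNClique m D)
    (hu : u ∈ D) (hw : w ∉ D) (hg : ∀ ⦃a b⦄, H.Adj a b → g a ≠ g b) {a b : V}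
    (hab : H.Adj a b) : g (Equiv.swap u w a) ≠ g (Equiv.swap u w b) := by
  have hsep := fun x y => hD.not_adj_sup_fiberGraph (x := x) (y := y)
  have := hg hab
  have := H.ne_of_adj hab
  have := hab.symm
  rw [Equiv.swap_apply_def, Equiv.swap_apply_def]
  split_ifs <;> subst_vars <;> grind

theorem IsIsolatedNClique.of_comp_swap
    (hD : (H ⊔ fiberGraph (g ∘ Equiv.swap u w)).IsIsolatedNClique m D) (hu : u ∉ D)
    (hw : w ∉ D) : (H ⊔ fiberGraph g).IsIsolatedNClique m D := by
  have hfix : ∀ x ∈ D, Equiv.swap u w x = x := fun x hx =>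
    Equiv.swap_apply_of_ne_of_ne (ne_of_mem_of_not_mem hx hu) (ne_of_mem_of_not_mem hx hw)
  refine ⟨⟨fun x hx y hy hxy => ?_, hD.1.card_eq⟩, fun x y hx hxy => ?_⟩
  · rcases hD.1.isClique hx hy hxy with h | ⟨hne, h⟩
    · exact Or.inl h
    · exact Or.inr ⟨hne, by simpa [hfix x hx, hfix y hy] using h⟩
  rcases hxy with h | ⟨hne, h⟩
  · exact hD.2 hx (Or.inl h)
  -- `swap u w y` has the new colour of `x`, so it lies in `D` and is therefore fixed
  set y' := Equiv.swap u w y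
  have hy : y = Equiv.swap u w y' := by simp [y']
  have hxy' : x ≠ y' := fun hxy' => hne (by rw [hy, ← hxy', hfix x hx])
  have hy' : y' ∈ D := hD.2 hx (Or.inr ⟨hxy', by simp [hfix x hx, y', h]⟩)
  rwa [hy, hfix y' hy']

theorem IsIsolatedNClique.notMem_of_comp_swap
    (hD : (H ⊔ fiberGraph g).IsIsolatedNClique m D) (hu : u ∈ D) (hw : w ∉ D) {t : V}
    (ht : t ∈ D) (htu : g t ≠ g u) (hgu : ∃ x ≠ u, g x = g u) (hgw : ∃ z ≠ w, g z = g w)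
    {m' : ℕ} {D' : Finset V}
    (hD' : (H ⊔ fiberGraph (g ∘ Equiv.swap u w)).IsIsolatedNClique m' D') :
    u ∉ D' ∧ w ∉ D' := by
  obtain ⟨x, hxu, hgx⟩ := hgu
  obtain ⟨z, hzw, hgz⟩ := hgw
  have hsep := fun a b => hD.not_adj_sup_fiberGraph (x := a) (y := b)
  have hx : x ∈ D := by_contra fun hx => (hsep u x hu hx).2 hgx.symm
  have hz : z ∉ D := fun hz => (hsep z w hz hw).2 hgz
  have hswap : ∀ a ∈ D, a ≠ u → Equiv.swap u w a = a := fun a ha hau =>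
    Equiv.swap_apply_of_ne_of_ne hau (ne_of_mem_of_not_mem ha hw)
  have hcross : ∀ a ∈ D', ∀ b ∈ D', a ∈ D → b ∉ D →
      g (Equiv.swap u w a) = g (Equiv.swap u w b) := fun a ha b hb haD hbD => by
    rcases hD'.1.isClique ha hb (ne_of_mem_of_not_mem haD hbD) with h | ⟨-, h⟩
    · exact absurd h (hsep a b haD hbD).1
    · exact h
  have htu' : t ≠ u := fun h => htu (h ▸ rfl)
  constructor
  · intro hu'
    have ht' : t ∈ D' := hD'.2 hu' (Or.inl (hD.adj_of_ne_sup_fiberGraph hu ht htu.symm))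
    have hzu : z ≠ u := fun h => hz (h ▸ hu)
    have hz' : z ∈ D' :=
      hD'.2 hu' (Or.inr ⟨hzu.symm, by simp [Equiv.swap_apply_of_ne_of_ne hzu hzw, hgz]⟩)
    have := hcross t ht' z hz' ht hz
    rw [hswap t ht htu', Equiv.swap_apply_of_ne_of_ne hzu hzw] at this
    exact (hsep t z ht hz).2 this
  · intro hw'
    have hx' : x ∈ D' := hD'.2 hw'
      (Or.inr ⟨(ne_of_mem_of_not_mem hx hw).symm, by simp [hswap x hx hxu, hgx]⟩)
    have ht' : t ∈ D' :=
      hD'.2 hx' (Or.inl (hD.adj_of_ne_sup_fiberGraph hx ht (hgx.trans_ne htu.symm)))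
    have := hcross t ht' w hw' ht hw
    rw [hswap t ht htu', Equiv.swap_apply_right] at this
    exact htu this

end Swap

/-- Among colourings with classes of size `k`, one minimising the number of isolated
`(ℓ + 1)`-cliques of `H ⊔ fiberGraph C` has none: otherwise swapping the colours of a vertex of
such a clique and a vertex outside it destroys that clique and creates no new one. -/
theorem exists_coloring_forall_not_isIsolatedNClique [Fintype V]
    {H : SimpleGraph V} {ℓ k : ℕ} (hk : 2 ≤ k) (hkℓ : k ≤ ℓ) (C₀ : H.Coloring (Fin ℓ))
    (hC₀ : ∀ j, #{v | C₀ v = j} = k) :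
    ∃ C : H.Coloring (Fin ℓ), (∀ j, #{v | C v = j} = k) ∧
      ∀ D, ¬ (H ⊔ fiberGraph C).IsIsolatedNClique (ℓ + 1) D := by
  classical
  obtain ⟨C, hC, hmin⟩ := exists_minimalFor_of_wellFoundedLT
    (fun C : H.Coloring (Fin ℓ) => ∀ j, #{v | C v = j} = k)
    (fun C => #{D : Finset V | (H ⊔ fiberGraph C).IsIsolatedNClique (ℓ + 1) D}) ⟨C₀, hC₀⟩
  refine ⟨C, hC, fun D hD => ?_⟩
  have hcard : Fintype.card V = ℓ * k := by
    simp [Fintype.card_eq_sum_card_filter C, hC]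
  obtain ⟨u, hu⟩ : D.Nonempty := by rw [← card_pos, hD.1.card_eq]; omega
  obtain ⟨w, -, hw⟩ := exists_mem_notMem_of_card_lt_card (s := D) (t := univ)
    (by rw [hD.1.card_eq, card_univ, hcard]; nlinarith)
  obtain ⟨t, ht, htu⟩ := exists_mem_notMem_of_card_lt_card (s := {v | C v = C u}) (t := D)
    (by rw [hC, hD.1.card_eq]; omega)
  have hfib : ∀ x, ∃ y ≠ x, C y = C x := fun x => by
    obtain ⟨y, hy, hyx⟩ := exists_mem_ne (s := {v | C v = C x}) (by rw [hC]; omega) x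
    exact ⟨y, hyx, by simpa using hy⟩
  let C' : H.Coloring (Fin ℓ) :=
    Coloring.mk (C ∘ Equiv.swap u w) fun hab => hD.comp_swap_ne hu hw (fun _ _ h => C.valid h) hab
  have hC' : ∀ j, #{v | C' v = j} = k := fun j => (card_filter_comp_equiv C _ j).trans (hC j)
  have hbad : ∀ D', (H ⊔ fiberGraph C').IsIsolatedNClique (ℓ + 1) D' →
      (H ⊔ fiberGraph C).IsIsolatedNClique (ℓ + 1) D' ∧ u ∉ D' := fun D' hD' =>
    have hD'uw := hD.notMem_of_comp_swap hu hw ht (by simpa using htu) (hfib u) (hfib w) hD'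
    ⟨hD'.of_comp_swap hD'uw.1 hD'uw.2, hD'uw.1⟩
  have hlt : #{D' : Finset V | (H ⊔ fiberGraph C').IsIsolatedNClique (ℓ + 1) D'} <
      #{D' : Finset V | (H ⊔ fiberGraph C).IsIsolatedNClique (ℓ + 1) D'} := by
    refine card_lt_card ⟨fun D' h => ?_, fun hsub => ?_⟩
    · simp only [mem_filter, mem_univ, true_and] at h ⊢
      exact (hbad D' h).1
    · have := hsub (by simpa using hD)
      simp only [mem_filter, mem_univ, true_and] at this
      exact (hbad D this).2 hu
  exact hlt.not_ge (hmin hC' hlt.le)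

theorem exists_coloring_card_fiber_eq {V : Type} [Fintype V] (G : SimpleGraph V) {ℓ k : ℕ}
    (hcard : Fintype.card V = ℓ * k)
    (hG : ∀ c : G.ConnectedComponent, EquitablyColorable c.toSimpleGraph ℓ) :
    ∃ C : G.Coloring (Fin ℓ), ∀ j, #{v | C v = j} = k := by
  classical
  choose f hf using hG
  set π := G.connectedComponentMk
  let f' : V → Fin ℓ := fun v => f (π v) ⟨v, rfl⟩
  have hf' : ∀ c (x : c.supp), f' x = f c x := by rintro c ⟨x, rfl⟩; rfl
  have hcount : ∀ c j, #{v | π v = c ∧ f' v = j} = {x | f c x = j}.ncard := by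
    intro c j
    rw [← Set.ncard_image_of_injective _ Subtype.val_injective, ← Set.ncard_coe_finset]
    congr 1
    ext v
    simp only [coe_filter, mem_univ, true_and, Set.mem_ofPred_eq, Set.mem_image, Subtype.exists]
    constructor
    · rintro ⟨hv, rfl⟩; exact ⟨v, hv, (hf' c ⟨v, hv⟩).symm, rfl⟩
    · rintro ⟨v, hv, rfl, rfl⟩; exact ⟨hv, hf' c ⟨v, hv⟩⟩
  obtain ⟨σ, hσ⟩ := IsEquitable.exists_perm_card_filter π f' fun c j j' => by
    simpa only [hcount] using (hf c).2 j j'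
  refine ⟨Coloring.mk (fun v => σ (π v) (f' v)) fun {u v} huv heq => ?_,
    hσ.eq_of_sum_eq ?_⟩
  · have hv : v ∈ (π u).supp := (ConnectedComponent.sound huv.reachable).symm
    rw [← hv, (σ (π v)).injective.eq_iff, hf' _ ⟨u, rfl⟩, hf' _ ⟨v, hv⟩] at heq
    exact (hf (π u)).1 ⟨u, rfl⟩ ⟨v, hv⟩ huv heq
  · rw [Fintype.card_fin, ← hcard]
    exact (Fintype.card_eq_sum_card_filter _).symm

end SimpleGraph

open SimpleGraph

theorem EDCC.equitablyColorable (h : EDCC) {V : Type} [Fintype V] {G : SimpleGraph V} {ℓ : ℕ}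
    (hℓ : ℓ ≠ 2) (hG : G.Connected) (hdeg : ∀ v, (G.neighborSet v).ncard ≤ ℓ)
    (hK : IsEmpty (G ≃g (⊤ : SimpleGraph (Fin (ℓ + 1)))))
    (hB : IsEmpty (G ≃g completeBipartiteGraph (Fin ℓ) (Fin ℓ))) : EquitablyColorable G ℓ := by
  by_contra hnot
  rcases (h V G ℓ hG hdeg).mp hnot with he | ⟨rfl, -⟩ | ⟨-, he⟩
  · exact hK.false he.some
  · exact hℓ rfl
  · exact hB.false he.some

theorem EDCC.exists_coloring_card_fiber_eq (h : EDCC) {V : Type} [Fintype V]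
    (G : SimpleGraph V) {ℓ k : ℕ} (hℓ : ℓ ≠ 2) (hcard : Fintype.card V = ℓ * k)
    (hdeg : ∀ v, (G.neighborSet v).ncard ≤ ℓ)
    (hK : ∀ c : G.ConnectedComponent,
      IsEmpty (c.toSimpleGraph ≃g (⊤ : SimpleGraph (Fin (ℓ + 1)))))
    (hB : ∀ c : G.ConnectedComponent,
      IsEmpty (c.toSimpleGraph ≃g completeBipartiteGraph (Fin ℓ) (Fin ℓ))) :
    ∃ C : G.Coloring (Fin ℓ), ∀ j, #{v | C v = j} = k := by
  classical
  exact G.exists_coloring_card_fiber_eq hcard fun c =>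
    h.equitablyColorable hℓ c.connected_toSimpleGraph
      (fun x => ((Copy.induce G c.supp).ncard_neighborSet_le x).trans (hdeg x)) (hK c) (hB c)

theorem EDCC.exists_coloring_card_fiber_eq_of_ncard_neighborSet_lt (h : EDCC) {V : Type}
    [Fintype V] (G : SimpleGraph V) {ℓ k : ℕ} (hℓ : ℓ ≠ 2) (hcard : Fintype.card V = ℓ * k)
    (hdeg : ∀ v, (G.neighborSet v).ncard < ℓ) :
    ∃ C : G.Coloring (Fin ℓ), ∀ j, #{v | C v = j} = k :=
  h.exists_coloring_card_fiber_eq G hℓ hcard (fun v => (hdeg v).le)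
    (fun _ => isEmpty_iso_induce_of_ncard_neighborSet_lt hdeg 0
      (by rw [ncard_neighborSet_top, Fintype.card_fin]; omega) _)
    (fun c => c.ind fun v => isEmpty_iso_induce_of_ncard_neighborSet_lt hdeg
      (.inl ⟨0, (Nat.zero_le _).trans_lt (hdeg v)⟩)
      (by simp [ncard_neighborSet_completeBipartiteGraph_inl]) _)

theorem sameBlock_iff_part_eq {n : ℕ} (P : Finpartition (univ : Finset (Fin n)))
    (u v : Fin n) : SameBlock P u v ↔ P.part u = P.part v := by
  rw [← P.mem_part_iff_part_eq_part (mem_univ u) (mem_univ v), P.mem_part_iff_exists]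
  rfl

theorem IsKkFactor.card_filter_part_eq {n k : ℕ} {P : Finpartition (univ : Finset (Fin n))}
    (hP : IsKkFactor k P) (v : Fin n) : #{x | P.part x = P.part v} = k := by
  have : ({x | P.part x = P.part v} : Finset (Fin n)) = P.part v := by
    ext x
    simp [P.mem_part_iff_part_eq_part (mem_univ x) (mem_univ v)]
  rw [this, hP _ (P.part_mem.mpr (mem_univ v))]

theorem ncard_neighborSet_iSup_fiberGraph_part_le {n k : ℕ} {ι : Type*} [Fintype ι]
    {F : ι → Finpartition (univ : Finset (Fin n))} (hF : ∀ i, IsKkFactor k (F i)) (v : Fin n) :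
    ((⨆ i, fiberGraph (F i).part).neighborSet v).ncard ≤ Fintype.card ι * (k - 1) :=
  (ncard_neighborSet_iSup_le _ v).trans
    (by simp [ncard_neighborSet_fiberGraph, (hF _).card_filter_part_eq])

theorem exists_isKkFactor_sameBlock_iff {n k : ℕ} {α : Type*} [DecidableEq α] (g : Fin n → α)
    (hg : ∀ v, #{x | g x = g v} = k) :
    ∃ P : Finpartition (univ : Finset (Fin n)), IsKkFactor k P ∧
      ∀ u v, SameBlock P u v ↔ g u = g v := by
  classical
  set P := Finpartition.ofSetoid (Setoid.ker g)
  have hP : ∀ u v, v ∈ P.part u ↔ g u = g v := fun _ _ => Finpartition.mem_part_ofSetoid_iff_rel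
  refine ⟨P, fun b hb => ?_, fun u v => ?_⟩
  · obtain ⟨v, -, rfl⟩ := P.part_surjOn hb
    rw [← hg v]
    congr 1
    ext x
    simp [hP, eq_comm]
  · rw [sameBlock_iff_part_eq, ← P.mem_part_iff_part_eq_part (mem_univ u) (mem_univ v), hP,
      eq_comm]

theorem RoundsEdgeDisjoint.symm {n : ℕ} {P Q : Finpartition (univ : Finset (Fin n))}
    (h : RoundsEdgeDisjoint P Q) : RoundsEdgeDisjoint Q P :=
  fun u v huv hQ hP => h u v huv hP hQ

theorem roundsEdgeDisjoint_of_coloring {n : ℕ} {P Q : Finpartition (univ : Finset (Fin n))}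
    {G : SimpleGraph (Fin n)} {α : Type*} (C : G.Coloring α)
    (hP : ∀ u v, SameBlock P u v → C u = C v) (hQ : fiberGraph Q.part ≤ G) :
    RoundsEdgeDisjoint P Q :=
  fun u v huv hPuv hQuv =>
    C.valid (hQ ⟨huv, (sameBlock_iff_part_eq Q u v).mp hQuv⟩) (hP u v hPuv)

theorem Nat.le_div_of_mul_sub_one_lt {k n : ℕ} (hkn : k ∣ n) (h : k * (k - 1) < n) :
    k ≤ n / k := by
  obtain ⟨ℓ, rfl⟩ := hkn
  rw [Nat.mul_div_cancel_left _ (Nat.pos_of_ne_zero (by rintro rfl; simp at h))]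
  have := Nat.lt_of_mul_lt_mul_left h
  omega

theorem Nat.div_sub_one_mul_add_le_div {k n : ℕ} (h : k * (k - 1) < n) :
    (n / (k * (k - 1)) - 1) * (k - 1) + (k - 1) ≤ n / k := by
  rcases Nat.lt_or_ge k 2 with hk | hk
  · simp [show k - 1 = 0 by omega]
  obtain ⟨q, hq⟩ : ∃ q, n / (k * (k - 1)) = q + 1 :=
    Nat.exists_eq_add_one.mpr (Nat.div_pos h.le (Nat.mul_pos (by omega) (by omega)))
  have : (q + 1) * (k - 1) ≤ n / k := by
    rw [← hq, ← Nat.div_div_eq_div_mul]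
    exact Nat.div_mul_le_self _ _
  rw [hq, Nat.add_sub_cancel]
  linarith [add_mul q 1 (k - 1)]

theorem two_more_rounds_of_EDCC_general (hEDCC : EDCC)
    (k n : ℕ) (hk : 3 ≤ k) (hkn : k ∣ n) (hbig : k * (k - 1) < n)
    (F : Fin (n / (k * (k - 1)) - 1) → Finpartition (Finset.univ : Finset (Fin n)))
    (hF : ∀ i, IsKkFactor k (F i)) :
    ∃ P P' : Finpartition (Finset.univ : Finset (Fin n)),
      IsKkFactor k P ∧ IsKkFactor k P' ∧
      (∀ i, RoundsEdgeDisjoint P (F i)) ∧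
      (∀ i, RoundsEdgeDisjoint P' (F i)) ∧
      RoundsEdgeDisjoint P P' := by
  classical
  set ℓ := n / k
  have hcard : Fintype.card (Fin n) = ℓ * k := by simp [ℓ, Nat.div_mul_cancel hkn]
  have hkℓ : k ≤ ℓ := Nat.le_div_of_mul_sub_one_lt hkn hbig
  set H := ⨆ i, fiberGraph (F i).part
  have hFH : ∀ i, fiberGraph (F i).part ≤ H := le_iSup (fun i => fiberGraph (F i).part)
  have hHdeg : ∀ v, (H.neighborSet v).ncard + (k - 1) ≤ ℓ := fun v => by
    have h₁ : (H.neighborSet v).ncard ≤ (n / (k * (k - 1)) - 1) * (k - 1) :=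
      (ncard_neighborSet_iSup_fiberGraph_part_le hF v).trans_eq (by simp)
    have := Nat.div_sub_one_mul_add_le_div hbig
    omega
  obtain ⟨C₁, hC₁⟩ := hEDCC.exists_coloring_card_fiber_eq_of_ncard_neighborSet_lt H (by omega)
    hcard fun v => by have := hHdeg v; omega
  obtain ⟨C, hC, hCbad⟩ := exists_coloring_forall_not_isIsolatedNClique (by omega) hkℓ C₁ hC₁
  obtain ⟨C₂, hC₂⟩ := hEDCC.exists_coloring_card_fiber_eq (H ⊔ fiberGraph C) (by omega) hcard
    (fun v => (ncard_neighborSet_sup_le _ _ v).trans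
      (by rw [ncard_neighborSet_fiberGraph, hC]; have := hHdeg v; omega))
    (fun c => ⟨fun e => (c.exists_isIsolatedNClique_of_iso e).elim hCbad⟩)
    (isEmpty_iso_completeBipartiteGraph_of_fiberGraph_le le_sup_right fun v => by rw [hC]; omega)
  obtain ⟨P, hP, hPC⟩ := exists_isKkFactor_sameBlock_iff C fun v => hC (C v)
  obtain ⟨P', hP', hP'C⟩ := exists_isKkFactor_sameBlock_iff C₂ fun v => hC₂ (C₂ v)
  refine ⟨P, P', hP, hP', fun i => roundsEdgeDisjoint_of_coloring C (hPC · · |>.mp) (hFH i),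
    fun i => roundsEdgeDisjoint_of_coloring C₂ (hP'C · · |>.mp) (le_sup_of_le_left (hFH i)),
    (roundsEdgeDisjoint_of_coloring C₂ (hP'C · · |>.mp) fun u v h => Or.inr
      ⟨h.1, (hPC u v).mp ((sameBlock_iff_part_eq P u v).mpr h.2)⟩).symm⟩

/-- Assuming EΔCC: for `n > k(k−1)`, every family of `⌊n/(k(k−1))⌋ − 1`
pairwise edge-disjoint `K_k`-factors of `K_n` can be extended by two further
rounds; in particular, choosing round `⌊n/(k(k−1))⌋` carefully, there is
always a tournament with `⌊n/(k(k−1))⌋ + 1` rounds. -/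
theorem two_more_rounds_of_EDCC (hEDCC : EDCC)
    (k n : ℕ) (hk : 3 ≤ k) (hn : 0 < n) (hkn : k ∣ n) (hbig : k * (k - 1) < n)
    (F : Fin (n / (k * (k - 1)) - 1) → Finpartition (Finset.univ : Finset (Fin n)))
    (hF : ∀ i, IsKkFactor k (F i))
    (hdisj : ∀ i j, i ≠ j → RoundsEdgeDisjoint (F i) (F j)) :
    ∃ P P' : Finpartition (Finset.univ : Finset (Fin n)),
      IsKkFactor k P ∧ IsKkFactor k P' ∧
      (∀ i, RoundsEdgeDisjoint P (F i)) ∧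
      (∀ i, RoundsEdgeDisjoint P' (F i)) ∧
      RoundsEdgeDisjoint P P' :=
  two_more_rounds_of_EDCC_general hEDCC k n hk hkn hbig F hF
end

section
/- Assume the uniform case of El-Zahar's conjecture holds. Let k ≥ 3 be an odd integer and let n be a positive integer divisible by k. If F_1, …, F_r are pairwise edge-disjoint C_k-factors of the complete graph K_n with r ≤ ⌊(n+2)/4 − n/(4k)⌋ − 1, then the feasibility graph contains a C_k-factor, i.e., the tournament can be extended. (Consequently, for k odd the greedy algorithm completes at least ⌊(n+2)/4 − n/(4k)⌋ rounds.) -/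
/-!
Every round is a 2-regular graph, so in the feasibility graph of `r` rounds each vertex has
degree at least `n - 1 - 2r`. For odd `k` and `l = n / k` the El-Zahar threshold is
`l⌈k/2⌉ = (n + l) / 2`, and the bound on `r` is exactly `4r + l + 2 ≤ n`, which makes
`n - 1 - 2r ≥ (n + l) / 2`.
-/

/-- A `C_k`-factor of the complete graph on `V`: a simple graph in which every
vertex has exactly two neighbors and every connected component has exactly `k`
vertices, i.e. a vertex-disjoint union of cycles of length `k` covering all
vertices. -/
def IsCkFactor {V : Type} (k : ℕ) (F : SimpleGraph V) : Prop :=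
  (∀ v : V, (F.neighborSet v).ncard = 2) ∧
  ∀ c : F.ConnectedComponent, c.supp.ncard = k

/-- The uniform case of El-Zahar's conjecture: for all `k ≥ 3` and `l ≥ 1`,
every graph on `l·k` vertices with minimum degree at least `l·⌈k/2⌉` contains
a `C_k`-factor. -/
def ElZaharUniform : Prop :=
  ∀ k l : ℕ, 3 ≤ k → 1 ≤ l →
    ∀ G : SimpleGraph (Fin (l * k)),
      (∀ v, l * ((k + 1) / 2) ≤ (G.neighborSet v).ncard) →
      ∃ N : SimpleGraph (Fin (l * k)), N ≤ G ∧ IsCkFactor k N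

lemma IsCkFactor.of_iso {V W : Type} {k : ℕ} {F : SimpleGraph V} {F' : SimpleGraph W}
    (φ : F ≃g F') (h : IsCkFactor k F) : IsCkFactor k F' :=
  ⟨fun w => (Set.ncard_congr' (φ.symm.mapNeighborSet w)).trans (h.1 _),
    fun c => (Set.ncard_congr' (SimpleGraph.ConnectedComponent.isoEquivSupp φ.symm c)).trans
      (h.2 _)⟩

def feasibilityGraph {V ι : Type} (F : ι → SimpleGraph V) : SimpleGraph V :=
  (⨆ i, F i)ᶜ

lemma disjoint_edgeSet_of_le_feasibilityGraph {V ι : Type} {F : ι → SimpleGraph V}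
    {N : SimpleGraph V} (hN : N ≤ feasibilityGraph F) (i : ι) :
    Disjoint N.edgeSet (F i).edgeSet :=
  SimpleGraph.disjoint_edgeSet.mpr ((le_compl_iff_disjoint_right.mp hN).mono_right (le_iSup F i))

lemma card_le_ncard_neighborSet_feasibilityGraph {V ι : Type} [Fintype V] [Fintype ι]
    (F : ι → SimpleGraph V) (d : ℕ) (v : V) (hF : ∀ i, ((F i).neighborSet v).ncard ≤ d) :
    Fintype.card V ≤ ((feasibilityGraph F).neighborSet v).ncard + Fintype.card ι * d + 1 := by
  have hunion : (⋃ i, (F i).neighborSet v).ncard ≤ Fintype.card ι * d :=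
    calc (⋃ i, (F i).neighborSet v).ncard ≤ ∑ i, ((F i).neighborSet v).ncard :=
          Set.ncard_iUnion_le_of_fintype _
      _ ≤ ∑ _i : ι, d := Finset.sum_le_sum fun i _ => hF i
      _ = Fintype.card ι * d := by simp
  have hcompl := Set.ncard_add_ncard_compl (⋃ i, (F i).neighborSet v)
  have hdiff := Set.ncard_le_ncard_sdiff_add_ncard (⋃ i, (F i).neighborSet v)ᶜ {v}
  rw [feasibilityGraph, SimpleGraph.neighborSet_compl, SimpleGraph.neighborSet_iSup]
  rw [Nat.card_eq_fintype_card] at hcompl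
  rw [Set.ncard_singleton] at hdiff
  omega

lemma ElZaharUniform.exists_isCkFactor_le (hEZ : ElZaharUniform) {V : Type} [Fintype V]
    {k l : ℕ} (hk : 3 ≤ k) (hl : 1 ≤ l) (hV : Fintype.card V = l * k) (G : SimpleGraph V)
    (hG : ∀ v, l * ((k + 1) / 2) ≤ (G.neighborSet v).ncard) :
    ∃ N ≤ G, IsCkFactor k N := by
  let e : Fin (l * k) ≃ V := (Fintype.equivFinOfCardEq hV).symm
  obtain ⟨N, hNG, hN⟩ := hEZ k l hk hl (G.comap e) fun v =>
    (hG (e v)).trans (Set.ncard_congr' ((SimpleGraph.Iso.comap e G).mapNeighborSet v)).ge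
  exact ⟨N.map e.toEmbedding, (SimpleGraph.map_le_iff_le_comap _ _ _).mpr hNG,
    hN.of_iso (SimpleGraph.Iso.map e N)⟩

lemma four_mul_add_div_add_two_le_of_le_floor {k n r : ℕ} (hk : 0 < k) (hkn : k ∣ n)
    (hr : (r : ℤ) ≤ ⌊((n : ℚ) + 2) / 4 - (n : ℚ) / (4 * k)⌋ - 1) :
    4 * r + n / k + 2 ≤ n := by
  have hnk : (n : ℚ) / (4 * k) = ((n / k : ℕ) : ℚ) / 4 := by
    rw [Nat.cast_div hkn (by positivity)]
    field_simp
  have hfloor : ((r + 1 : ℤ) : ℚ) ≤ ((n : ℚ) + 2) / 4 - ((n / k : ℕ) : ℚ) / 4 :=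
    Int.le_floor.mp (by rw [← hnk]; omega)
  have : ((4 * r + n / k + 2 : ℕ) : ℚ) ≤ n := by push_cast at hfloor ⊢; linarith
  exact_mod_cast this

theorem greedy_oberwolfach_odd_elzahar_general (hEZ : ElZaharUniform)
    (k n : ℕ) (hk : 3 ≤ k) (hko : Odd k) (hkn : k ∣ n)
    (r : ℕ) (hr : (r : ℤ) ≤ ⌊((n : ℚ) + 2) / 4 - (n : ℚ) / (4 * k)⌋ - 1)
    (F : Fin r → SimpleGraph (Fin n))
    (hF : ∀ i, IsCkFactor k (F i)) :
    ∃ N : SimpleGraph (Fin n), IsCkFactor k N ∧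
      ∀ i, Disjoint N.edgeSet (F i).edgeSet := by
  have hn : 4 * r + n / k + 2 ≤ n := four_mul_add_div_add_two_le_of_le_floor (by omega) hkn hr
  set l := n / k
  have hnl : n = l * k := (Nat.div_mul_cancel hkn).symm
  have hl : 1 ≤ l := Nat.pos_of_ne_zero fun h => by rw [h, zero_mul] at hnl; omega
  have hdeg (v : Fin n) : l * ((k + 1) / 2) ≤ ((feasibilityGraph F).neighborSet v).ncard := by
    have := card_le_ncard_neighborSet_feasibilityGraph F 2 v fun i => ((hF i).1 v).le
    simp only [Fintype.card_fin] at this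
    obtain ⟨m, hm⟩ := hko
    have hodd : n = 2 * (l * m) + l := by rw [hnl, hm]; ring
    rw [show (k + 1) / 2 = m + 1 by omega, mul_add, mul_one]
    omega
  obtain ⟨N, hNG, hN⟩ := hEZ.exists_isCkFactor_le hk hl ((Fintype.card_fin n).trans hnl) _ hdeg
  exact ⟨N, hN, disjoint_edgeSet_of_le_feasibilityGraph hNG⟩

/-- Assuming the uniform El-Zahar conjecture: for odd `k ≥ 3` and `k ∣ n`,
any family of `r ≤ ⌊(n+2)/4 − n/(4k)⌋ − 1` pairwise edge-disjoint
`C_k`-factors of `K_n` can be extended by another `C_k`-factor edge-disjoint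
from all of them. -/
theorem greedy_oberwolfach_odd_elzahar (hEZ : ElZaharUniform)
    (k n : ℕ) (hk : 3 ≤ k) (hko : Odd k) (hn : 0 < n) (hkn : k ∣ n)
    (r : ℕ) (hr : (r : ℤ) ≤ ⌊((n : ℚ) + 2) / 4 - (n : ℚ) / (4 * k)⌋ - 1)
    (F : Fin r → SimpleGraph (Fin n))
    (hF : ∀ i, IsCkFactor k (F i))
    (hdisj : ∀ i j : Fin r, i ≠ j → Disjoint (F i).edgeSet (F j).edgeSet) :
    ∃ N : SimpleGraph (Fin n), IsCkFactor k N ∧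
      ∀ i, Disjoint N.edgeSet (F i).edgeSet :=
  greedy_oberwolfach_odd_elzahar_general hEZ k n hk hko hkn r hr F hF
end
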